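/- arXiv:1202.6390 — 2 statements merged into one kernel-verified Lean document; each statement's English description precedes it below -/
import Mathlib

section
/- Let X be a Banach space, F a regular thin family, and (x_s)_{s∈F} a bounded F-sequence in X (i.e. there is C > 0 with ‖x_s‖ ≤ C for all s ∈ F). Then for every sequence (δ_n) of positive real numbers and every N ∈ [ℕ]^∞ there exists M ∈ [N]^∞ such that for every l ∈ ℕ, every 1 ≤ k ≤ l, every a₁,…,a_k ∈ [−1,1] and all plegma k-tuples (t₁,…,t_k) and (s₁,…,s_k) in F↾M with s₁(1) ≥ M(l) and t₁(1) ≥ M(l), one has |‖Σ_{j=1}^k a_j x_{t_j}‖ − ‖Σ_{j=1}^k a_j x_{s_j}‖| ≤ δ_l. -/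
open Set Filter

namespace HOSM

/-- `t` is an initial segment of the finite set `s` (w.r.t. the increasing enumerations). -/
def InitSeg (t s : Finset ℕ) : Prop :=
  t ⊆ s ∧ ∀ a ∈ s, ∀ b ∈ t, a ≤ b → a ∈ t

/-- `t` is a proper initial segment of `s`. -/
def ProperInitSeg (t s : Finset ℕ) : Prop := InitSeg t s ∧ t ≠ s

/-- The initial-segment closure `F̂` of a family `F`. -/
def hat (F : Set (Finset ℕ)) : Set (Finset ℕ) := {t | ∃ s ∈ F, InitSeg t s}

/-- The restriction `F↾L = {s ∈ F : s ⊆ L}`. -/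
def restrict (F : Set (Finset ℕ)) (L : Set ℕ) : Set (Finset ℕ) :=
  {s | s ∈ F ∧ (s : Set ℕ) ⊆ L}

/-- `F` is hereditary: it contains all subsets of its members. -/
def Hereditary (F : Set (Finset ℕ)) : Prop := ∀ s ∈ F, ∀ t ⊆ s, t ∈ F

/-- `elt s k` is the `k`-th smallest element of `s` (0-indexed; junk value `0` out of range). -/
def elt (s : Finset ℕ) (k : ℕ) : ℕ := (s.sort (· ≤ ·)).getD k 0

/-- `F` is spreading. -/
def Spreading (F : Set (Finset ℕ)) : Prop :=
  ∀ s ∈ F, ∀ t : Finset ℕ, t.card = s.card → (∀ k < s.card, elt s k ≤ elt t k) → t ∈ F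

/-- The characteristic function of a finite set, as an element of `{0,1}^ℕ`. -/
def chi (s : Finset ℕ) : ℕ → Bool := fun n => decide (n ∈ s)

/-- `F` is compact: the set of characteristic functions of its members is closed in `{0,1}^ℕ`. -/
def CompactFam (F : Set (Finset ℕ)) : Prop := IsClosed (chi '' F)

/-- `F` is regular: compact, hereditary and spreading. -/
def RegularFam (F : Set (Finset ℕ)) : Prop := CompactFam F ∧ Hereditary F ∧ Spreading F

/-- `F` is thin: no member is a proper initial segment of another member. -/
def Thin (F : Set (Finset ℕ)) : Prop := ∀ s ∈ F, ∀ t ∈ F, ¬ ProperInitSeg t s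

/-- `F` is regular thin: thin, and its closure `F̂` is regular. -/
def RegularThin (F : Set (Finset ℕ)) : Prop := Thin F ∧ RegularFam (hat F)

/-- The relation on finite sets: `extRel F t s` iff `t ∈ F̂` and `s` is a proper initial
segment of `t`.  Rank with respect to it computes the order `o_{F̂}`. -/
def extRel (F : Set (Finset ℕ)) (t s : Finset ℕ) : Prop := t ∈ hat F ∧ ProperInitSeg s t

open scoped Classical in
/-- The order `o(F)` of a family: the ordinal rank of the tree `F̂` at `∅`
(junk value `0` if `F̂` is ill-founded). -/
noncomputable def famOrder (F : Set (Finset ℕ)) : Ordinal :=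
  if h : Acc (extRel F) (∅ : Finset ℕ) then h.rank else 0

/-- `nth L k` is the `k`-th smallest element of the set `L` (0-indexed). -/
noncomputable def nth (L : Set ℕ) (k : ℕ) : ℕ := Nat.nth (· ∈ L) k

/-- `L(s) = {L(k) : k ∈ s}` for a finite set `s`. -/
noncomputable def mapSet (L : Set ℕ) (s : Finset ℕ) : Finset ℕ := s.image (nth L)

/-- An `l`-tuple of nonempty finite subsets of `ℕ` is a plegma family. -/
def IsPlegma {l : ℕ} (s : Fin l → Finset ℕ) : Prop :=
  (∀ i, (s i).Nonempty) ∧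
  (∀ i j : Fin l, i < j → ∀ k, k < (s i).card → k < (s j).card →
      elt (s i) k < elt (s j) k) ∧
  (∀ i j : Fin l, ∀ k, k < (s i).card → k + 1 < (s j).card →
      elt (s i) k < elt (s j) (k + 1))

/-- A plegma pair. -/
def IsPlegmaPair (s t : Finset ℕ) : Prop := IsPlegma ![s, t]

/-- `Plm l G`: the set of plegma `l`-tuples with members in `G`. -/
def Plm (l : ℕ) (G : Set (Finset ℕ)) : Set (Fin l → Finset ℕ) :=
  {s | IsPlegma s ∧ ∀ i, s i ∈ G}

/-- `s` is an initial segment of the infinite set `N`. -/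
def InitSegOfInf (s : Finset ℕ) (N : Set ℕ) : Prop :=
  (s : Set ℕ) ⊆ N ∧ ∀ a ∈ N, ∀ b ∈ s, a ≤ b → a ∈ s

/-- `F` is very large in `M`: every infinite subset of `M` has an initial segment in `F`. -/
def VeryLarge (F : Set (Finset ℕ)) (M : Set ℕ) : Prop :=
  ∀ N : Set ℕ, N ⊆ M → N.Infinite → ∃ s ∈ F, InitSegOfInf s N

/-- `F↾↾L`. -/
def restrict2 (F : Set (Finset ℕ)) (L : Set ℕ) : Set (Finset ℕ) :=
  {s | s ∈ restrict F L ∧ ∀ j, j + 1 < s.card → ∃ l ∈ L, elt s j < l ∧ l < elt s (j + 1)}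

/-- `φ` is plegma preserving on `D`. -/
def PlegmaPreserving (D : Set (Finset ℕ)) (φ : Finset ℕ → Finset ℕ) : Prop :=
  ∀ s₁ ∈ D, ∀ s₂ ∈ D, IsPlegmaPair s₁ s₂ → IsPlegmaPair (φ s₁) (φ s₂)

end HOSM

namespace HOSM

/-- The product topology on finite subsets of `ℕ`, induced from `{0,1}^ℕ`
via characteristic functions. -/
instance : TopologicalSpace (Finset ℕ) := TopologicalSpace.induced chi inferInstance

/-- The `F`-subsequence `(x_s)_{s ∈ F↾L}` is subordinated with respect to the topological
space `X`: there is a continuous map `φ̂ : F̂↾L → X` with `φ̂ s = x s` for `s ∈ F↾L`. -/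
def Subordinated {X : Type*} [TopologicalSpace X]
    (F : Set (Finset ℕ)) (L : Set ℕ) (x : Finset ℕ → X) : Prop :=
  ∃ φ : Finset ℕ → X, ContinuousOn φ (restrict (hat F) L) ∧ ∀ s ∈ restrict F L, φ s = x s

/-- `(x_s)_{s ∈ F↾L}` is subordinated with respect to the weak topology of the normed
space `X` (continuity into the weak topology = continuity of all composites with
continuous linear functionals). -/
def SubordinatedWeak {X : Type*} [NormedAddCommGroup X] [NormedSpace ℝ X]
    (F : Set (Finset ℕ)) (L : Set ℕ) (x : Finset ℕ → X) : Prop :=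
  ∃ φ : Finset ℕ → X,
    (∀ f : X →L[ℝ] ℝ, ContinuousOn (fun s => f (φ s)) (restrict (hat F) L)) ∧
    ∀ s ∈ restrict F L, φ s = x s

/-- The `F`-subsequence `(x_s)_{s ∈ F↾L}` is weakly null: it converges to `0` in the
weak topology of `X`. -/
def WeaklyNullSub {X : Type*} [NormedAddCommGroup X] [NormedSpace ℝ X]
    (F : Set (Finset ℕ)) (L : Set ℕ) (x : Finset ℕ → X) : Prop :=
  ∀ f : X →L[ℝ] ℝ, ∀ ε > (0 : ℝ), ∃ m : ℕ,
    ∀ s ∈ restrict F L, nth L m ≤ elt s 0 → |f (x s)| < ε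

/-- `(x_s)_{s ∈ F↾M}` generates `(e_n)` as an `F`-spreading model with respect to the
sequence of errors `(δ_l)`. -/
def GeneratesSM {X E : Type*} [NormedAddCommGroup X] [NormedSpace ℝ X]
    [SeminormedAddCommGroup E] [NormedSpace ℝ E]
    (F : Set (Finset ℕ)) (M : Set ℕ) (x : Finset ℕ → X) (e : ℕ → E) (δ : ℕ → ℝ) : Prop :=
  ∀ l k : ℕ, 1 ≤ k → k ≤ l → ∀ a : Fin k → ℝ, (∀ j, |a j| ≤ 1) →
    ∀ s : Fin k → Finset ℕ, IsPlegma s → (∀ j, s j ∈ restrict F M) →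
      (∀ j, nth M l ≤ elt (s j) 0) →
      |‖∑ j, a j • x (s j)‖ - ‖∑ j, a j • e (j : ℕ)‖| ≤ δ l

/-- `(x_s)_{s ∈ F↾M}` generates `(e_n)` as an `F`-spreading model (for some null
sequence of positive errors). -/
def Generates {X E : Type*} [NormedAddCommGroup X] [NormedSpace ℝ X]
    [SeminormedAddCommGroup E] [NormedSpace ℝ E]
    (F : Set (Finset ℕ)) (M : Set ℕ) (x : Finset ℕ → X) (e : ℕ → E) : Prop :=
  ∃ δ : ℕ → ℝ, (∀ n, 0 < δ n) ∧ Tendsto δ atTop (nhds 0) ∧ GeneratesSM F M x e δ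

/-- `(x_s)_{s ∈ F}` admits `(e_n)` as an `F`-spreading model. -/
def Admits {X E : Type*} [NormedAddCommGroup X] [NormedSpace ℝ X]
    [SeminormedAddCommGroup E] [NormedSpace ℝ E]
    (F : Set (Finset ℕ)) (x : Finset ℕ → X) (e : ℕ → E) : Prop :=
  ∃ M : Set ℕ, M.Infinite ∧ Generates F M x e

end HOSM

open HOSM

/-!
A `k`-tuple of members of the thin family `F` is encoded into infinite sets `K ⊆ ℕ` by
interleaving: its `i`-th member is read off the positions `k m + i` of `K`. Since `F` is thin
and `F̂` is compact, the norm `‖∑ a_j x_{t_j}‖` of the decoded tuple `t` is a locally constant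
function of `K ∈ [ℕ]^∞`, so by the Galvin–Prikry theorem for clopen sets it is almost constant
on `[L]^∞` for some infinite `L`; as it depends on `a ∈ [-1,1]^k` in an equi-Lipschitz way, this
holds for all `a` at once. A fusion argument then builds `M` together with sets `L_l`, good for
the error `δ_l`, such that the points of `M` beyond `M(l)` are so sparse in `L_l` that every
plegma tuple taken from them is the decoding of an infinite subset of `L_l`.
-/

namespace HOSM

open scoped Classical

/-! ### Enumerations -/

lemma elt_eq_orderEmbOfFin (s : Finset ℕ) {m : ℕ} (hm : m < s.card) :
    elt s m = s.orderEmbOfFin rfl ⟨m, hm⟩ := by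
  rw [elt, List.getD_eq_getElem _ _ (by simpa using hm), Finset.orderEmbOfFin_apply]
  rfl

lemma elt_mem {s : Finset ℕ} {m : ℕ} (hm : m < s.card) : elt s m ∈ s := by
  rw [elt_eq_orderEmbOfFin s hm]
  exact Finset.orderEmbOfFin_mem _ _ _

lemma elt_lt_elt {s : Finset ℕ} {m n : ℕ} (hmn : m < n) (hn : n < s.card) :
    elt s m < elt s n := by
  rw [elt_eq_orderEmbOfFin s (hmn.trans hn), elt_eq_orderEmbOfFin s hn]
  exact (s.orderEmbOfFin rfl).strictMono hmn

lemma elt_le_elt {s : Finset ℕ} {m n : ℕ} (hmn : m ≤ n) (hn : n < s.card) :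
    elt s m ≤ elt s n :=
  hmn.eq_or_lt.elim (fun h => h ▸ le_rfl) fun h => (elt_lt_elt h hn).le

lemma mem_iff_exists_elt {s : Finset ℕ} {x : ℕ} : x ∈ s ↔ ∃ m < s.card, elt s m = x := by
  rw [← Finset.mem_coe, ← Finset.range_orderEmbOfFin s rfl]
  constructor
  · rintro ⟨⟨m, hm⟩, rfl⟩
    exact ⟨m, hm, elt_eq_orderEmbOfFin s hm⟩
  · rintro ⟨m, hm, rfl⟩
    exact ⟨⟨m, hm⟩, (elt_eq_orderEmbOfFin s hm).symm⟩

lemma elt_zero_le {s : Finset ℕ} {x : ℕ} (hx : x ∈ s) : elt s 0 ≤ x := by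
  obtain ⟨m, hm, rfl⟩ := mem_iff_exists_elt.mp hx
  exact elt_le_elt m.zero_le hm

lemma nth_mem {L : Set ℕ} (hL : L.Infinite) (k : ℕ) : nth L k ∈ L :=
  Nat.nth_mem_of_infinite hL k

lemma nth_strictMono {L : Set ℕ} (hL : L.Infinite) : StrictMono (nth L) :=
  Nat.nth_strictMono hL

lemma count_nth {L : Set ℕ} (hL : L.Infinite) (k : ℕ) : Nat.count (· ∈ L) (nth L k) = k :=
  Nat.count_nth_of_infinite (p := (· ∈ L)) hL k

lemma nth_count {L : Set ℕ} {x : ℕ} (hx : x ∈ L) : nth L (Nat.count (· ∈ L) x) = x :=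
  Nat.nth_count hx

lemma nth_range {g : ℕ → ℕ} (hg : StrictMono g) (k : ℕ) : nth (range g) k = g k := by
  have hinf : (range g).Infinite := infinite_range_of_injective hg.injective
  refine (Nat.eq_nth_of_strictMonoOn_of_mapsTo_of_surjOn (p := (· ∈ range g)) g
    (fun _ ⟨i, hi⟩ => ⟨i, fun hf => absurd hf hinf, hi⟩) (fun i _ => ⟨i, rfl⟩)
    (hg.strictMonoOn _) (fun hf => absurd hf hinf)).symm

lemma count_eq_of_inter_Iio_eq {K K' : Set ℕ} {n x : ℕ} (h : K' ∩ Iio n = K ∩ Iio n)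
    (hx : x ≤ n) : Nat.count (· ∈ K') x = Nat.count (· ∈ K) x := by
  simp only [Nat.count_eq_card_filter_range]
  congr 1
  refine Finset.filter_congr fun y hy => ?_
  have hy : y < n := (Finset.mem_range.mp hy).trans_le hx
  simpa [hy] using congrArg (y ∈ ·) h

lemma nth_eq_of_inter_Iio_eq {K K' : Set ℕ} (hK : K.Infinite) {n p : ℕ}
    (h : K' ∩ Iio n = K ∩ Iio n) (hp : nth K p < n) : nth K' p = nth K p := by
  have hmem : nth K p ∈ K' := (h.symm ▸ ⟨nth_mem hK p, hp⟩ : nth K p ∈ K' ∩ Iio n).1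
  conv_lhs => rw [← count_nth hK p, ← count_eq_of_inter_Iio_eq h hp.le]
  exact nth_count hmem

lemma count_add_count_le {S T : Set ℕ} {a b : ℕ} (hT : T ⊆ S ∩ Ioi a) (hab : a ≤ b) :
    Nat.count (· ∈ S) a + Nat.count (· ∈ T) b ≤ Nat.count (· ∈ S) b := by
  simp only [Nat.count_eq_card_filter_range]
  rw [← Finset.card_union_of_disjoint]
  · refine Finset.card_le_card fun x hx => ?_
    simp only [Finset.mem_union, Finset.mem_filter, Finset.mem_range] at hx ⊢
    rcases hx with ⟨hxa, hxS⟩ | ⟨hxb, hxT⟩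
    · exact ⟨hxa.trans_le hab, hxS⟩
    · exact ⟨hxb, (hT hxT).1⟩
  · simp only [Finset.disjoint_left, Finset.mem_filter, Finset.mem_range]
    exact fun x hxa hxT => (hT hxT.2).2.not_gt hxa.1

lemma mul_add_lt_mul {k m i N : ℕ} (hi : i < k) (hm : m < N) : k * m + i < k * N :=
  calc k * m + i < k * (m + 1) := by rw [mul_add_one]; omega
    _ ≤ k * N := Nat.mul_le_mul_left k hm

/-! ### Shrinking infinite sets -/

lemma infinite_inter_Ioi {A : Set ℕ} (hA : A.Infinite) (b : ℕ) : (A ∩ Ioi b).Infinite := by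
  simpa [sdiff_eq, compl_Iic] using hA.sdiff (finite_Iic b)

theorem exists_subset_forall_of_finite {ι : Type*} {T : Set ι} (hT : T.Finite)
    {Good : ι → Set ℕ → Prop} (hanti : ∀ i ∈ T, ∀ ⦃B B'⦄, B' ⊆ B → Good i B → Good i B')
    (hex : ∀ i ∈ T, ∀ A : Set ℕ, A.Infinite → ∃ B ⊆ A, B.Infinite ∧ Good i B)
    {A : Set ℕ} (hA : A.Infinite) : ∃ B ⊆ A, B.Infinite ∧ ∀ i ∈ T, Good i B := by
  suffices ∀ t ⊆ T, ∃ B ⊆ A, B.Infinite ∧ ∀ i ∈ t, Good i B from this T subset_rfl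
  intro t ht
  induction t, hT.subset ht using Set.Finite.induction_on with
  | empty => exact ⟨A, subset_rfl, hA, fun _ h => absurd h (notMem_empty _)⟩
  | @insert a t _ _ ih =>
    obtain ⟨B, hBA, hB, hBt⟩ := ih ((subset_insert a t).trans ht)
    obtain ⟨B', hB'B, hB', hB'a⟩ := hex a (ht (mem_insert a t)) B hB
    refine ⟨B', hB'B.trans hBA, hB', ?_⟩
    rintro i (rfl | hi)
    · exact hB'a
    · exact hanti i (ht (mem_insert_of_mem a hi)) hB'B (hBt i hi)

/-- The set `L / s` of combinatorial forcing. -/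
def tail (L : Set ℕ) (s : Finset ℕ) : Set ℕ := {x ∈ L | ∀ y ∈ s, y < x}

lemma tail_empty (L : Set ℕ) : tail L ∅ = L := by
  simp [tail]

noncomputable def fusionPt (A : ℕ → Set ℕ) (r : ℕ → ℕ) (i : ℕ) : ℕ := nth (A i) (r i)

structure IsFusionSeq (A : ℕ → Set ℕ) (r : ℕ → ℕ) : Prop where
  infinite : ∀ i, (A i).Infinite
  succ_subset : ∀ i, A (i + 1) ⊆ A i ∩ Ioi (fusionPt A r i)

theorem exists_isFusionSeq (r : ℕ → ℕ) {Q : ℕ → Finset ℕ → Set ℕ → Prop}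
    (hQ : ∀ i E A, A.Infinite → ∃ B ⊆ A, B.Infinite ∧ Q i E B) {L : Set ℕ}
    (hL : L.Infinite) :
    ∃ A, IsFusionSeq A r ∧ A 0 ⊆ L ∧
      ∀ i, Q i ((Finset.range i).image (fusionPt A r)) (A i) := by
  choose! B hBA hBinf hBQ using hQ
  -- the state at stage `i` is the pair (points chosen so far, current set)
  let step (i : ℕ) (p : Finset ℕ × Set ℕ) : Finset ℕ × Set ℕ :=
    (insert (nth p.2 (r i)) p.1,
      B (i + 1) (insert (nth p.2 (r i)) p.1) (p.2 ∩ Ioi (nth p.2 (r i))))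
  let seq (i : ℕ) : Finset ℕ × Set ℕ := Nat.rec (∅, B 0 ∅ L) step i
  have hinf : ∀ i, (seq i).2.Infinite := fun i => by
    induction i with
    | zero => exact hBinf _ _ _ hL
    | succ i ih => exact hBinf _ _ _ (infinite_inter_Ioi ih _)
  have hE : ∀ i, (seq i).1 = (Finset.range i).image (fusionPt (fun j => (seq j).2) r) := by
    intro i
    induction i with
    | zero => rfl
    | succ i ih =>
      rw [Finset.range_add_one, Finset.image_insert, ← ih]
      rfl
  refine ⟨fun i => (seq i).2, ⟨hinf, fun i => hBA _ _ _ (infinite_inter_Ioi (hinf i) _)⟩,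
    hBA _ _ _ hL, fun i => ?_⟩
  rw [← hE]
  cases i with
  | zero => exact hBQ _ _ _ hL
  | succ i => exact hBQ _ _ _ (infinite_inter_Ioi (hinf i) _)

namespace IsFusionSeq

variable {A : ℕ → Set ℕ} {r : ℕ → ℕ} (hA : IsFusionSeq A r)
include hA

lemma antitone : Antitone A :=
  antitone_nat_of_succ_le fun i => (hA.succ_subset i).trans inter_subset_left

lemma pt_mem {i j : ℕ} (hij : i ≤ j) : fusionPt A r j ∈ A i :=
  hA.antitone hij (nth_mem (hA.infinite j) _)

lemma strictMono : StrictMono (fusionPt A r) :=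
  strictMono_nat_of_lt_succ fun i => (hA.succ_subset i (hA.pt_mem le_rfl)).2

lemma range_subset : range (fusionPt A r) ⊆ A 0 := by
  rintro _ ⟨j, rfl⟩
  exact hA.pt_mem j.zero_le

lemma mem_of_pt_lt {i x : ℕ} (hx : x ∈ range (fusionPt A r)) (hix : fusionPt A r i < x) :
    x ∈ A (i + 1) := by
  obtain ⟨j, rfl⟩ := hx
  exact hA.pt_mem (hA.strictMono.lt_iff_lt.mp hix)

lemma exists_subset_image_range (s : Finset ℕ) (hs : ↑s ⊆ range (fusionPt A r)) :
    ∃ i, s ⊆ (Finset.range i).image (fusionPt A r) ∧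
      tail (range (fusionPt A r)) s ⊆ A i := by
  induction s using Finset.induction_on with
  | empty => exact ⟨0, by simp, fun x hx => hA.range_subset hx.1⟩
  | @insert x s _ ih =>
    obtain ⟨j, rfl⟩ := hs (Finset.mem_insert_self _ _)
    obtain ⟨i, hsi, hti⟩ := ih ((Finset.coe_subset.mpr (Finset.subset_insert _ _)).trans hs)
    refine ⟨max i (j + 1), Finset.insert_subset ?_ (hsi.trans ?_), fun y hy => ?_⟩
    · exact Finset.mem_image_of_mem _ (Finset.mem_range.mpr (by omega))
    · exact Finset.image_subset_image (Finset.range_subset_range.mpr (le_max_left _ _))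
    · rcases le_total i (j + 1) with h | h
      · rw [max_eq_right h]
        exact hA.mem_of_pt_lt hy.1 (hy.2 _ (Finset.mem_insert_self _ _))
      · rw [max_eq_left h]
        exact hti ⟨hy.1, fun z hz => hy.2 z (Finset.mem_insert_of_mem hz)⟩

lemma count_add_le_count {i j : ℕ} (hij : i ≤ j) :
    Nat.count (· ∈ A i) (fusionPt A r j) + r (j + 1) ≤
      Nat.count (· ∈ A i) (fusionPt A r (j + 1)) := by
  have h := count_add_count_le (S := A i) (T := A (j + 1))
    (fun y hy => ⟨hA.antitone (by omega) hy, (hA.succ_subset j hy).2⟩)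
    (hA.strictMono (Nat.lt_succ_self j)).le
  rwa [show Nat.count (· ∈ A (j + 1)) (fusionPt A r (j + 1)) = r (j + 1) from
    count_nth (hA.infinite _) _] at h

lemma count_add_le_count_of_lt {i j j' : ℕ} (hij : i ≤ j) (hjj' : j < j') :
    Nat.count (· ∈ A i) (fusionPt A r j) + r (j + 1) ≤
      Nat.count (· ∈ A i) (fusionPt A r j') :=
  (hA.count_add_le_count hij).trans (Nat.count_monotone _ (hA.strictMono.monotone hjj'))

end IsFusionSeq

/-! ### The Galvin–Prikry theorem for clopen sets -/

/-- Local constancy of `c` on `[ℕ]^∞` for the product topology. -/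
def FinitelyDetermined {α : Type*} (c : Set ℕ → α) : Prop :=
  ∀ K : Set ℕ, K.Infinite →
    ∃ n, ∀ K' : Set ℕ, K'.Infinite → K' ∩ Iio n = K ∩ Iio n → c K' = c K

lemma FinitelyDetermined.comp {α β : Type*} {c : Set ℕ → α} (hc : FinitelyDetermined c)
    (g : α → β) : FinitelyDetermined (g ∘ c) := fun K hK =>
  (hc K hK).imp fun _ hn K' hK' h => congrArg g (hn K' hK' h)

section Forcing

variable (P : Set ℕ → Prop)

def Accepts (s : Finset ℕ) (L : Set ℕ) : Prop := ∀ K ⊆ L, K.Infinite → P (↑s ∪ K)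

def Rejects (s : Finset ℕ) (L : Set ℕ) : Prop := ∀ K ⊆ L, K.Infinite → ¬ Accepts P s K

def Decides (s : Finset ℕ) (L : Set ℕ) : Prop := Accepts P s L ∨ Rejects P s L

variable {P} {s : Finset ℕ} {L L' : Set ℕ}

lemma Accepts.mono (h : Accepts P s L) (hL : L' ⊆ L) : Accepts P s L' :=
  fun K hK => h K (hK.trans hL)

lemma Rejects.mono (h : Rejects P s L) (hL : L' ⊆ L) : Rejects P s L' :=
  fun K hK => h K (hK.trans hL)

lemma Decides.mono (h : Decides P s L) (hL : L' ⊆ L) : Decides P s L' :=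
  h.imp (·.mono hL) (·.mono hL)

lemma exists_decides (s : Finset ℕ) (hL : L.Infinite) :
    ∃ K ⊆ L, K.Infinite ∧ Decides P s K := by
  by_cases h : ∃ K ⊆ L, K.Infinite ∧ Accepts P s K
  · obtain ⟨K, hKL, hK, hacc⟩ := h
    exact ⟨K, hKL, hK, .inl hacc⟩
  · push Not at h
    exact ⟨L, subset_rfl, hL, .inr h⟩

lemma exists_decides_tail (hL : L.Infinite) :
    ∃ L' ⊆ L, L'.Infinite ∧ ∀ s : Finset ℕ, ↑s ⊆ L' → Decides P s (tail L' s) := by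
  obtain ⟨A, hA, hAL, hdec⟩ := exists_isFusionSeq (fun _ => 0)
    (Q := fun _ E B => ∀ s ∈ (E.powerset : Set (Finset ℕ)), Decides P s B)
    (fun _ E _ hA => exists_subset_forall_of_finite E.powerset.finite_toSet
      (fun _ _ _ _ hB h => h.mono hB) (fun s _ _ => exists_decides s) hA) hL
  refine ⟨range (fusionPt A _), hA.range_subset.trans hAL,
    infinite_range_of_injective hA.strictMono.injective, fun s hs => ?_⟩
  obtain ⟨i, hsi, hti⟩ := hA.exists_subset_image_range s hs
  exact (hdec i s (Finset.mem_powerset.mpr hsi)).mono hti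

lemma Rejects.finite_setOf_accepts_insert (hs : Rejects P s (tail L s)) :
    {n ∈ tail L s | Accepts P (insert n s) (tail L (insert n s))}.Finite := by
  -- otherwise these points form an infinite set accepting `s`
  by_contra hinf
  refine hs _ (fun n hn => hn.1) hinf fun K hK hKinf => ?_
  have hn : sInf K ∈ K := Nat.sInf_mem hKinf.nonempty
  have hK' : K \ {sInf K} ⊆ tail L (insert (sInf K) s) := by
    rintro y ⟨hyK, hyn⟩
    refine ⟨(hK hyK).1.1, fun z hz => ?_⟩
    rcases Finset.mem_insert.mp hz with rfl | hz
    · exact (Nat.sInf_le hyK).lt_of_ne (Ne.symm hyn)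
    · exact (hK hyK).1.2 z hz
  have heq : ↑(insert (sInf K) s) ∪ (K \ {sInf K}) = ↑s ∪ K := by
    rw [Finset.coe_insert, insert_union, ← union_insert, insert_sdiff_singleton,
      insert_eq_of_mem hn]
  exact heq ▸ (hK hn).2 (K \ {sInf K}) hK' (hKinf.sdiff (finite_singleton _))

variable (hdec : ∀ s : Finset ℕ, ↑s ⊆ L → Decides P s (tail L s))
include hdec

lemma exists_subset_rejects_insert {E : Finset ℕ}
    (hE : ∀ s ∈ E.powerset, ↑s ⊆ L → Rejects P s (tail L s)) {A : Set ℕ} (hA : A.Infinite) :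
    ∃ B ⊆ A, B.Infinite ∧ ∀ n ∈ B, ∀ s ∈ E.powerset, ↑s ⊆ L → n ∈ tail L s →
      Rejects P (insert n s) (tail L (insert n s)) := by
  have hX : ∀ s ∈ E.powerset,
      {n ∈ tail L s | ↑s ⊆ L ∧ Accepts P (insert n s) (tail L (insert n s))}.Finite := by
    intro s hs
    by_cases hsL : ↑s ⊆ L
    · exact (hE s hs hsL).finite_setOf_accepts_insert.subset fun n hn => ⟨hn.1, hn.2.2⟩
    · exact finite_empty.subset fun n hn => hsL hn.2.1
  refine ⟨A \ ⋃ s ∈ E.powerset, _, sdiff_subset,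
    hA.sdiff (E.powerset.finite_toSet.biUnion hX), fun n hn s hs hsL hns => ?_⟩
  have hL' : ↑(insert n s) ⊆ L := by
    rw [Finset.coe_insert]
    exact insert_subset hns.1 hsL
  refine (hdec _ hL').resolve_left fun hacc => hn.2 ?_
  exact mem_biUnion hs ⟨hns, hsL, hacc⟩

omit hdec in
lemma forall_rejects_insert {E : Finset ℕ} {n : ℕ}
    (hE : ∀ s ∈ E.powerset, ↑s ⊆ L → Rejects P s (tail L s))
    (hn : ∀ s ∈ E.powerset, ↑s ⊆ L → n ∈ tail L s →
      Rejects P (insert n s) (tail L (insert n s)))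
    (hnE : ∀ y ∈ E, y < n) :
    ∀ s ∈ (insert n E).powerset, ↑s ⊆ L → Rejects P s (tail L s) := by
  intro s hs hsL
  rw [Finset.mem_powerset] at hs
  by_cases hns : n ∈ s
  · have hsE : s.erase n ⊆ E := Finset.subset_insert_iff.mp hs
    rw [← Finset.insert_erase hns]
    exact hn _ (Finset.mem_powerset.mpr hsE)
      ((Finset.coe_subset.mpr (Finset.erase_subset _ _)).trans hsL)
      ⟨hsL hns, fun y hy => hnE y (hsE hy)⟩
  · exact hE s (Finset.mem_powerset.mpr ((Finset.subset_insert_iff_of_notMem hns).mp hs)) hsL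

lemma exists_rejects_tail (hL : L.Infinite) (h₀ : Rejects P ∅ L) :
    ∃ L' ⊆ L, L'.Infinite ∧ ∀ s : Finset ℕ, ↑s ⊆ L' → Rejects P s (tail L s) := by
  let R (E : Finset ℕ) : Prop := ∀ s ∈ E.powerset, ↑s ⊆ L → Rejects P s (tail L s)
  obtain ⟨A, hA, hAL, hext⟩ := exists_isFusionSeq (fun _ => 0)
    (Q := fun _ E B => R E → ∀ n ∈ B, ∀ s ∈ E.powerset, ↑s ⊆ L → n ∈ tail L s →
      Rejects P (insert n s) (tail L (insert n s)))
    (fun _ E A hA => by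
      by_cases hE : R E
      · obtain ⟨B, hBA, hB, hrej⟩ := exists_subset_rejects_insert hdec hE hA
        exact ⟨B, hBA, hB, fun _ => hrej⟩
      · exact ⟨A, subset_rfl, hA, fun h => absurd h hE⟩) hL
  have hR : ∀ i, R ((Finset.range i).image (fusionPt A fun _ => 0)) := by
    intro i
    induction i with
    | zero =>
      intro s hs _
      rw [Finset.mem_powerset, Finset.range_zero, Finset.image_empty,
        Finset.subset_empty] at hs
      rwa [hs, tail_empty]
    | succ i ih =>
      rw [Finset.range_add_one, Finset.image_insert]
      refine forall_rejects_insert ih (hext i ih _ (hA.pt_mem le_rfl)) fun y hy => ?_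
      obtain ⟨j, hj, rfl⟩ := Finset.mem_image.mp hy
      exact hA.strictMono (Finset.mem_range.mp hj)
  refine ⟨range (fusionPt A _), hA.range_subset.trans hAL,
    infinite_range_of_injective hA.strictMono.injective, fun s hs => ?_⟩
  obtain ⟨i, hsi, -⟩ := hA.exists_subset_image_range s hs
  exact hR i s (Finset.mem_powerset.mpr hsi) (hs.trans (hA.range_subset.trans hAL))

end Forcing

theorem exists_homogeneous {P : Set ℕ → Prop} (hP : FinitelyDetermined P) {L : Set ℕ}
    (hL : L.Infinite) :
    ∃ L' ⊆ L, L'.Infinite ∧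
      ((∀ K ⊆ L', K.Infinite → P K) ∨ ∀ K ⊆ L', K.Infinite → ¬ P K) := by
  obtain ⟨L₁, hL₁L, hL₁, hdec⟩ := exists_decides_tail (P := P) hL
  by_cases hacc : ∃ K ⊆ L₁, K.Infinite ∧ Accepts P ∅ K
  · obtain ⟨K, hKL, hK, hacc⟩ := hacc
    exact ⟨K, hKL.trans hL₁L, hK, .inl fun K' hK' hK'inf => by simpa using hacc K' hK' hK'inf⟩
  push Not at hacc
  obtain ⟨L₂, hL₂L, hL₂, hrej⟩ := exists_rejects_tail hdec hL₁ hacc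
  refine ⟨L₂, hL₂L.trans hL₁L, hL₂, .inr fun K hK hKinf hPK => ?_⟩
  -- the initial segment of `K` that determines `P K` is accepted by the rest of `K`
  obtain ⟨n, hn⟩ := hP K hKinf
  set s := ((finite_Iio n).inter_of_right K).toFinset
  have hs : (↑s : Set ℕ) = K ∩ Iio n := Set.Finite.coe_toFinset _
  refine hrej s (hs ▸ inter_subset_left.trans hK) (K ∩ Ici n)
    (fun x hx => ⟨hL₂L (hK hx.1), fun y hy => ?_⟩)
    (by simpa [sdiff_eq] using hKinf.sdiff (finite_Iio n)) fun K' hK' hK'inf => ?_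
  · rw [← Finset.mem_coe, hs] at hy
    exact hy.2.trans_le hx.2
  · rw [hn _ (hK'inf.mono subset_union_right)]
    · exact hPK
    · ext x
      simp only [hs, mem_inter_iff, mem_union, mem_Iio]
      constructor
      · rintro ⟨(h | h), hx⟩
        · exact h
        · exact absurd (hK' h).2 (not_le.mpr hx)
      · rintro ⟨h, hx⟩
        exact ⟨.inl ⟨h, hx⟩, hx⟩

def AlmostConstantOn (f : Set ℕ → ℝ) (ε : ℝ) (L : Set ℕ) : Prop :=
  ∀ K₁ ⊆ L, K₁.Infinite → ∀ K₂ ⊆ L, K₂.Infinite → |f K₁ - f K₂| ≤ ε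

lemma AlmostConstantOn.mono {f : Set ℕ → ℝ} {ε : ℝ} {L L' : Set ℕ}
    (h : AlmostConstantOn f ε L) (hL : L' ⊆ L) : AlmostConstantOn f ε L' :=
  fun K₁ hK₁ h₁ K₂ hK₂ h₂ => h K₁ (hK₁.trans hL) h₁ K₂ (hK₂.trans hL) h₂

/-- The values of `f` fall into finitely many intervals of length `ε`, and each of them is a
clopen condition. -/
theorem exists_almostConstantOn {f : Set ℕ → ℝ} (hf : FinitelyDetermined f) {B : ℝ}
    (hB : ∀ K, |f K| ≤ B) {ε : ℝ} (hε : 0 < ε) {L : Set ℕ} (hL : L.Infinite) :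
    ∃ L' ⊆ L, L'.Infinite ∧ AlmostConstantOn f ε L' := by
  set N := ⌈B / ε⌉
  have hfloor : ∀ K, ⌊f K / ε⌋ ∈ Icc (-N) N := fun K => by
    have h : |f K / ε| ≤ B / ε := by
      rw [abs_div, abs_of_pos hε]
      exact div_le_div_of_nonneg_right (hB K) hε.le
    refine ⟨Int.le_floor.mpr ?_, (Int.floor_mono (abs_le.mp h).2).trans (Int.floor_le_ceil _)⟩
    push_cast
    linarith [(abs_le.mp h).1, Int.le_ceil (B / ε)]
  obtain ⟨L', hL'L, hL', hhom⟩ := exists_subset_forall_of_finite (finite_Icc (-N) N)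
    (Good := fun v L' => (∀ K ⊆ L', K.Infinite → ⌊f K / ε⌋ = v) ∨
      ∀ K ⊆ L', K.Infinite → ⌊f K / ε⌋ ≠ v)
    (fun _ _ _ _ hB h => h.imp (fun h K hK => h K (hK.trans hB)) fun h K hK => h K (hK.trans hB))
    (fun v _ A hA => exists_homogeneous (hf.comp fun y => ⌊y / ε⌋ = v) hA) hL
  refine ⟨L', hL'L, hL', fun K₁ hK₁ h₁ K₂ hK₂ h₂ => ?_⟩
  have hfl : ⌊f K₁ / ε⌋ = ⌊f K₂ / ε⌋ :=
    ((hhom _ (hfloor K₁)).resolve_right (fun h => h K₁ hK₁ h₁ rfl) K₂ hK₂ h₂).symm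
  have := (Int.abs_sub_lt_one_of_floor_eq_floor hfl).le
  rwa [← sub_div, abs_div, abs_of_pos hε, div_le_one hε] at this

/-- It suffices to make the functions indexed by a finite `ε / 4`-net almost constant. -/
theorem exists_almostConstantOn_of_isCompact {ι : Type*} [PseudoMetricSpace ι] {T : Set ι}
    (hT : IsCompact T) {f : ι → Set ℕ → ℝ} (hf : ∀ i ∈ T, FinitelyDetermined (f i))
    {B : ℝ} (hB : ∀ i ∈ T, ∀ K, |f i K| ≤ B)
    (hequi : ∀ δ > 0, ∃ η > 0, ∀ K, ∀ i ∈ T, ∀ j ∈ T, dist i j < η →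
      |f i K - f j K| ≤ δ)
    {ε : ℝ} (hε : 0 < ε) {L : Set ℕ} (hL : L.Infinite) :
    ∃ L' ⊆ L, L'.Infinite ∧ ∀ i ∈ T, AlmostConstantOn (f i) ε L' := by
  obtain ⟨η, hη, hfη⟩ := hequi (ε / 4) (by positivity)
  obtain ⟨t, htT, ht, hcover⟩ := finite_cover_balls_of_compact hT hη
  obtain ⟨L', hL'L, hL', hconst⟩ := exists_subset_forall_of_finite ht
    (Good := fun j => AlmostConstantOn (f j) (ε / 2)) (fun _ _ _ _ hB h => h.mono hB)
    (fun j hj _ hA => exists_almostConstantOn (hf j (htT hj)) (hB j (htT hj)) (by positivity) hA)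
    hL
  refine ⟨L', hL'L, hL', fun i hi K₁ hK₁ hK₁inf K₂ hK₂ hK₂inf => ?_⟩
  obtain ⟨j, hj, hij⟩ := mem_iUnion₂.mp (hcover hi)
  have h₁ := abs_le.mp (hfη K₁ i hi j (htT hj) hij)
  have h₂ := abs_le.mp (hfη K₂ i hi j (htT hj) hij)
  have h₃ := abs_le.mp (hconst j hj K₁ hK₁ hK₁inf K₂ hK₂ hK₂inf)
  exact abs_le.mpr ⟨by linarith, by linarith⟩

/-! ### Decoding tuples of members of a thin family -/

def IsPrefixOf (u : Finset ℕ) (a : ℕ → ℕ) : Prop := ∀ m < u.card, elt u m = a m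

lemma IsPrefixOf.eq_image_range {u : Finset ℕ} {a : ℕ → ℕ} (h : IsPrefixOf u a) :
    u = (Finset.range u.card).image a := by
  ext x
  rw [mem_iff_exists_elt, Finset.mem_image]
  refine exists_congr fun m => ?_
  rw [Finset.mem_range]
  exact ⟨fun ⟨hm, hx⟩ => ⟨hm, (h m hm).symm.trans hx⟩, fun ⟨hm, hx⟩ => ⟨hm, (h m hm).trans hx⟩⟩

lemma IsPrefixOf.initSeg_image_range {u : Finset ℕ} {a : ℕ → ℕ} (h : IsPrefixOf u a)
    {r : ℕ} (hr : r ≤ u.card) : InitSeg ((Finset.range r).image a) u := by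
  refine ⟨fun x hx => ?_, fun x hx y hy hxy => ?_⟩
  · obtain ⟨m, hm, rfl⟩ := Finset.mem_image.mp hx
    have hm : m < u.card := (Finset.mem_range.mp hm).trans_le hr
    exact h m hm ▸ elt_mem hm
  · obtain ⟨m, hm, rfl⟩ := Finset.mem_image.mp hy
    obtain ⟨m', hm', rfl⟩ := mem_iff_exists_elt.mp hx
    have hm : m < r := Finset.mem_range.mp hm
    rw [← h m (hm.trans_le hr)] at hxy
    have hm'm : m' ≤ m := le_of_not_gt fun hlt => (elt_lt_elt hlt hm').not_ge hxy
    exact Finset.mem_image.mpr ⟨m', Finset.mem_range.mpr (hm'm.trans_lt hm), (h m' hm').symm⟩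

lemma Thin.eq_of_isPrefixOf {F : Set (Finset ℕ)} (hF : Thin F) {u v : Finset ℕ} (hu : u ∈ F)
    (hv : v ∈ F) {a : ℕ → ℕ} (hua : IsPrefixOf u a) (hva : IsPrefixOf v a) : u = v := by
  wlog huv : u.card ≤ v.card generalizing u v
  · exact (this hv hu hva hua (le_of_not_ge huv)).symm
  by_contra hne
  have hinit : InitSeg u v := hua.eq_image_range ▸ hva.initSeg_image_range huv
  exact hF v hv u hu ⟨hinit, hne⟩

lemma exists_image_range_notMem_hat {F : Set (Finset ℕ)} (hF : IsClosed (chi '' hat F))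
    {a : ℕ → ℕ} (ha : StrictMono a) : ∃ r, (Finset.range r).image a ∉ hat F := by
  by_contra! h
  have hlim : Tendsto (fun r => chi ((Finset.range r).image a)) atTop
      (nhds fun n => decide (n ∈ range a)) := by
    refine tendsto_pi_nhds.mpr fun n => tendsto_const_nhds.congr' ?_
    filter_upwards [eventually_gt_atTop n] with r hr
    simp only [chi, Finset.mem_image, Finset.mem_range, mem_range]
    exact decide_eq_decide.mpr ⟨fun ⟨m, hm⟩ => ⟨m, (ha.id_le m).trans_lt (hm ▸ hr), hm⟩,
      fun ⟨m, _, hm⟩ => ⟨m, hm⟩⟩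
  obtain ⟨u, -, hu⟩ := hF.mem_of_tendsto hlim (Eventually.of_forall fun r => ⟨_, h r, rfl⟩)
  refine infinite_range_of_injective ha.injective (u.finite_toSet.subset fun x hx => ?_)
  simpa [chi, hx] using congrFun hu x

def IsDecoding (F : Set (Finset ℕ)) (k : ℕ) (K : Set ℕ) (t : Fin k → Finset ℕ) : Prop :=
  ∀ i, t i ∈ F ∧ IsPrefixOf (t i) fun m => nth K (k * m + i)

section Decoding

variable {F : Set (Finset ℕ)} {k : ℕ}

lemma IsDecoding.congr {N : ℕ} {K K' : Set ℕ} {t : Fin k → Finset ℕ}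
    (ht : IsDecoding F k K t) (hN : ∀ i, (t i).card ≤ N)
    (h : ∀ p < k * N, nth K' p = nth K p) : IsDecoding F k K' t := fun i =>
  ⟨(ht i).1, fun m hm =>
    ((ht i).2 m hm).trans (h _ (mul_add_lt_mul i.2 (hm.trans_le (hN i)))).symm⟩

lemma IsDecoding.unique (hF : Thin F) {K : Set ℕ} {t t' : Fin k → Finset ℕ}
    (ht : IsDecoding F k K t) (ht' : IsDecoding F k K t') : t = t' :=
  funext fun i => hF.eq_of_isPrefixOf (ht i).1 (ht' i).1 (ht i).2 (ht' i).2

lemma exists_forall_not_isDecoding (hF : IsClosed (chi '' hat F)) {K : Set ℕ}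
    (hK : K.Infinite) (h : ∀ t, ¬ IsDecoding F k K t) :
    ∃ N, ∀ K' : Set ℕ, (∀ p < k * N, nth K' p = nth K p) → ∀ t, ¬ IsDecoding F k K' t := by
  have hmono (i : Fin k) : StrictMono fun m => nth K (k * m + i) := fun m m' hm =>
    nth_strictMono hK (by have := Nat.mul_lt_mul_of_pos_left hm i.pos; omega)
  -- by compactness of `F̂`, the `i`-th subsequence leaves `F̂` after `r i` terms
  choose r hr using fun i => exists_image_range_notMem_hat hF (hmono i)
  refine ⟨Finset.univ.sup r, fun K' hK' t ht =>
    h t (ht.congr (fun i => ?_) fun p hp => (hK' p hp).symm)⟩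
  have hri : r i ≤ Finset.univ.sup r := Finset.le_sup (Finset.mem_univ i)
  refine (le_of_not_ge fun hle => hr i ?_).trans hri
  have himg : (Finset.range (r i)).image (fun m => nth K' (k * m + i)) =
      (Finset.range (r i)).image fun m => nth K (k * m + i) := Finset.image_congr fun m hm =>
    hK' _ (mul_add_lt_mul i.2 ((Finset.mem_range.mp hm).trans_le hri))
  exact ⟨t i, (ht i).1, himg ▸ (ht i).2.initSeg_image_range hle⟩

variable {α : Type*} [Inhabited α]

noncomputable def decodeColoring (F : Set (Finset ℕ)) (k : ℕ) (ψ : (Fin k → Finset ℕ) → α)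
    (K : Set ℕ) : α :=
  if h : ∃ t, IsDecoding F k K t then ψ h.choose else default

lemma decodeColoring_eq (hF : Thin F) (ψ : (Fin k → Finset ℕ) → α) {K : Set ℕ}
    {t : Fin k → Finset ℕ} (ht : IsDecoding F k K t) : decodeColoring F k ψ K = ψ t := by
  have h : ∃ t, IsDecoding F k K t := ⟨t, ht⟩
  rw [decodeColoring, dif_pos h, h.choose_spec.unique hF ht]

lemma finitelyDetermined_decodeColoring (hF : Thin F) (hcl : IsClosed (chi '' hat F))
    (ψ : (Fin k → Finset ℕ) → α) : FinitelyDetermined (decodeColoring F k ψ) := by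
  intro K hK
  have hagree : ∀ N K', K' ∩ Iio (nth K (k * N)) = K ∩ Iio (nth K (k * N)) →
      ∀ p < k * N, nth K' p = nth K p := fun N K' h p hp =>
    nth_eq_of_inter_Iio_eq hK h (nth_strictMono hK hp)
  by_cases h : ∃ t, IsDecoding F k K t
  · obtain ⟨t, ht⟩ := h
    refine ⟨nth K (k * Finset.univ.sup fun i => (t i).card), fun K' _ hK' => ?_⟩
    have hcard (i : Fin k) : (t i).card ≤ Finset.univ.sup fun i => (t i).card :=
      Finset.le_sup (f := fun i => (t i).card) (Finset.mem_univ i)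
    rw [decodeColoring_eq hF ψ ht, decodeColoring_eq hF ψ (ht.congr hcard (hagree _ K' hK'))]
  · push Not at h
    obtain ⟨N, hN⟩ := exists_forall_not_isDecoding hcl hK h
    refine ⟨nth K (k * N), fun K' _ hK' => ?_⟩
    have h' : ¬ ∃ t, IsDecoding F k K' t := fun ⟨t, ht⟩ => hN K' (hagree N K' hK') t ht
    rw [decodeColoring, decodeColoring, dif_neg h', dif_neg (not_exists.mpr h)]

end Decoding

/-! ### Encoding plegma tuples -/

lemma exists_strictMono_eqOn {ι : Type*} (I : Finset ι) (pos φ : ι → ℕ)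
    (h₀ : ∀ a ∈ I, pos a ≤ φ a)
    (h : ∀ a ∈ I, ∀ b ∈ I, pos a ≤ pos b → φ a + (pos b - pos a) ≤ φ b) :
    ∃ d : ℕ → ℕ, StrictMono d ∧ ∀ a ∈ I, d (pos a) = φ a := by
  -- the least strictly increasing function above all the constraints
  refine ⟨fun p => max p ((I.filter (pos · ≤ p)).sup fun a => φ a + (p - pos a)),
    strictMono_nat_of_lt_succ fun p => ?_, fun a ha => le_antisymm ?_ ?_⟩
  · refine max_lt (p.lt_succ_self.trans_le (le_max_left _ _)) ?_
    rw [Finset.sup_lt_iff (p.succ_pos.trans_le (le_max_left _ _))]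
    intro a ha
    have ha' : a ∈ I.filter (pos · ≤ p + 1) := by
      simp only [Finset.mem_filter] at ha ⊢
      exact ⟨ha.1, ha.2.trans p.le_succ⟩
    refine lt_of_lt_of_le ?_ (le_max_of_le_right (Finset.le_sup ha'))
    simp only [Finset.mem_filter] at ha
    omega
  · refine max_le (h₀ a ha) (Finset.sup_le fun b hb => ?_)
    simp only [Finset.mem_filter] at hb
    exact h b hb.1 a ha hb.2
  · refine le_max_of_le_right (le_trans ?_ (Finset.le_sup (f := fun b => φ b + (pos a - pos b))
      (Finset.mem_filter.mpr ⟨ha, le_rfl⟩)))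
    simp

lemma exists_nth_eq {S : Set ℕ} (hS : S.Infinite) {ι : Type*} (I : Finset ι)
    (pos val : ι → ℕ) (hval : ∀ a ∈ I, val a ∈ S)
    (h₀ : ∀ a ∈ I, pos a ≤ Nat.count (· ∈ S) (val a))
    (h : ∀ a ∈ I, ∀ b ∈ I, pos a ≤ pos b →
      Nat.count (· ∈ S) (val a) + (pos b - pos a) ≤ Nat.count (· ∈ S) (val b)) :
    ∃ K ⊆ S, K.Infinite ∧ ∀ a ∈ I, nth K (pos a) = val a := by
  obtain ⟨d, hd, hdI⟩ := exists_strictMono_eqOn I pos _ h₀ h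
  have hmono : StrictMono (nth S ∘ d) := (nth_strictMono hS).comp hd
  refine ⟨range (nth S ∘ d), range_subset_iff.mpr fun p => nth_mem hS _,
    infinite_range_of_injective hmono.injective, fun a ha => ?_⟩
  rw [nth_range hmono, Function.comp_apply, hdI a ha, nth_count (hval a ha)]

lemma count_elt_add_mul_le {S : Set ℕ} {u : Finset ℕ} {G : ℕ}
    (hgap : ∀ x ∈ u, ∀ y ∈ u, x < y → Nat.count (· ∈ S) x + G ≤ Nat.count (· ∈ S) y)
    {m m' : ℕ} (hmm' : m ≤ m') (hm' : m' < u.card) :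
    Nat.count (· ∈ S) (elt u m) + G * (m' - m) ≤ Nat.count (· ∈ S) (elt u m') := by
  induction m', hmm' using Nat.le_induction with
  | base => simp
  | succ m' hmm' ih =>
    have h₁ := hgap _ (elt_mem (m'.lt_succ_self.trans hm')) _ (elt_mem hm')
      (elt_lt_elt m'.lt_succ_self hm')
    have h₂ := ih (m'.lt_succ_self.trans hm')
    rw [Nat.succ_sub hmm', Nat.mul_succ]
    omega

section Plegma

variable {S : Set ℕ} {k : ℕ} {s : Fin k → Finset ℕ} (hs : IsPlegma s)
  (hgap : ∀ i j, ∀ x ∈ s i, ∀ y ∈ s j, x < y →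
    Nat.count (· ∈ S) x + 2 * k ≤ Nat.count (· ∈ S) y)
include hs hgap

lemma IsPlegma.count_add_le {i j : Fin k} {m m' : ℕ} (hm : m < (s i).card)
    (hm' : m' < (s j).card) (hpos : k * m + i ≤ k * m' + j) :
    Nat.count (· ∈ S) (elt (s i) m) + (k * m' + j - (k * m + i)) ≤
      Nat.count (· ∈ S) (elt (s j) m') := by
  have hmm' : m ≤ m' := le_of_not_gt fun hlt => by
    have := mul_add_lt_mul j.2 hlt
    omega
  rcases hmm'.lt_or_eq with hlt | rfl
  · -- plegma condition (ii) leads from `s i` into `s j`, the gaps inside `s j` do the rest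
    obtain ⟨d, rfl⟩ : ∃ d, m' = m + 1 + d := ⟨m' - (m + 1), by omega⟩
    have h₁ := hgap i j _ (elt_mem hm) _ (elt_mem (by omega : m + 1 < (s j).card))
      (hs.2.2 i j m hm (by omega))
    have h₂ := count_elt_add_mul_le (hgap j j) (by omega : m + 1 ≤ m + 1 + d) hm'
    rw [Nat.add_sub_cancel_left] at h₂
    have h₃ : k * (m + 1 + d) = k * m + k + k * d := by ring
    have h₄ : 2 * k * d = 2 * (k * d) := by ring
    rw [h₃] at hpos ⊢
    rw [h₄] at h₂
    have := j.2
    omega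
  · have hij : i ≤ j := Fin.le_iff_val_le_val.mpr (by omega)
    rcases hij.lt_or_eq with hij | rfl
    · have := hgap i j _ (elt_mem hm) _ (elt_mem hm') (hs.2.1 i j hij m hm hm')
      have := j.2
      omega
    · simp

lemma IsPlegma.exists_nth_eq_elt (hS : S.Infinite) (hsS : ∀ i, ↑(s i) ⊆ S) :
    ∃ K ⊆ S, K.Infinite ∧ ∀ i, ∀ m < (s i).card, nth K (k * m + i) = elt (s i) m := by
  let I : Finset (Σ _ : Fin k, ℕ) := Finset.univ.sigma fun i => Finset.range (s i).card
  have hI : ∀ a ∈ I, a.2 < (s a.1).card := fun a ha =>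
    Finset.mem_range.mp (Finset.mem_sigma.mp ha).2
  have hgapI : ∀ a ∈ I, ∀ b ∈ I, k * a.2 + a.1 ≤ k * b.2 + b.1 →
      Nat.count (· ∈ S) (elt (s a.1) a.2) + (k * b.2 + b.1 - (k * a.2 + a.1)) ≤
        Nat.count (· ∈ S) (elt (s b.1) b.2) := fun a ha b hb =>
    hs.count_add_le hgap (hI a ha) (hI b hb)
  have hpos : ∀ a ∈ I, k * a.2 + a.1 ≤ Nat.count (· ∈ S) (elt (s a.1) a.2) := fun a ha => by
    have h₀ : (⟨⟨0, a.1.pos⟩, 0⟩ : Σ _ : Fin k, ℕ) ∈ I := Finset.mem_sigma.mpr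
      ⟨Finset.mem_univ _, Finset.mem_range.mpr (Finset.card_pos.mpr (hs.1 _))⟩
    have := hgapI _ h₀ a ha (by simp)
    simp only [mul_zero, zero_add, Nat.sub_zero] at this
    omega
  obtain ⟨K, hKS, hK, hKI⟩ := exists_nth_eq hS I (fun a => k * a.2 + a.1)
    (fun a => elt (s a.1) a.2) (fun a ha => hsS a.1 (elt_mem (hI a ha))) hpos hgapI
  exact ⟨K, hKS, hK, fun i m hm =>
    hKI ⟨i, m⟩ (Finset.mem_sigma.mpr ⟨Finset.mem_univ _, Finset.mem_range.mpr hm⟩)⟩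

end Plegma

/-- The points were chosen so that `A l` has at least `2 l` elements between any two of them
beyond the `l`-th one. -/
lemma IsFusionSeq.exists_isDecoding {A : ℕ → Set ℕ} (hA : IsFusionSeq A fun j => 2 * j)
    {F : Set (Finset ℕ)} {k l : ℕ} (hkl : k ≤ l) {s : Fin k → Finset ℕ} (hs : IsPlegma s)
    (hsF : ∀ i, s i ∈ restrict F (range (fusionPt A fun j => 2 * j)))
    (hsl : ∀ i, nth (range (fusionPt A fun j => 2 * j)) l ≤ elt (s i) 0) :
    ∃ K ⊆ A l, K.Infinite ∧ IsDecoding F k K s := by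
  set e := fusionPt A fun j => 2 * j with he
  have hidx : ∀ i, ∀ x ∈ s i, ∃ j, l ≤ j ∧ e j = x := fun i x hx => by
    obtain ⟨j, rfl⟩ := (hsF i).2 hx
    refine ⟨j, hA.strictMono.le_iff_le.mp ?_, rfl⟩
    rw [← nth_range hA.strictMono]
    exact (hsl i).trans (elt_zero_le hx)
  have hgap : ∀ i j, ∀ x ∈ s i, ∀ y ∈ s j, x < y →
      Nat.count (· ∈ A l) x + 2 * k ≤ Nat.count (· ∈ A l) y := by
    intro i j x hx y hy hxy
    obtain ⟨p, hlp, rfl⟩ := hidx i x hx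
    obtain ⟨q, -, rfl⟩ := hidx j y hy
    have := hA.count_add_le_count_of_lt hlp (hA.strictMono.lt_iff_lt.mp hxy)
    rw [← he] at this
    omega
  obtain ⟨K, hKA, hK, hKs⟩ := hs.exists_nth_eq_elt hgap (hA.infinite l) fun i x hx => by
    obtain ⟨j, hlj, rfl⟩ := hidx i x hx
    exact hA.pt_mem hlj
  exact ⟨K, hKA, hK, fun i => ⟨(hsF i).1, fun m hm => (hKs i m hm).symm⟩⟩

/-! ### Stabilization of the decoded norms -/

lemma abs_norm_sum_smul_sub_le {X : Type*} [SeminormedAddCommGroup X] [NormedSpace ℝ X]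
    {k : ℕ} {C : ℝ} {y : Fin k → X} (hy : ∀ j, ‖y j‖ ≤ C) (a b : Fin k → ℝ) :
    |‖∑ j, a j • y j‖ - ‖∑ j, b j • y j‖| ≤ k * C * ‖a - b‖ := by
  refine (abs_norm_sub_norm_le _ _).trans ?_
  rw [← Finset.sum_sub_distrib]
  simp_rw [← sub_smul]
  refine (norm_sum_le _ _).trans ?_
  calc ∑ j, ‖(a j - b j) • y j‖ ≤ ∑ _j : Fin k, ‖a - b‖ * C :=
        Finset.sum_le_sum fun j _ => by
          rw [norm_smul]
          exact mul_le_mul (norm_le_pi_norm (a - b) j) (hy j) (norm_nonneg _) (norm_nonneg _)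
    _ = k * C * ‖a - b‖ := by
        rw [Finset.sum_const, Finset.card_univ, Fintype.card_fin, nsmul_eq_mul]
        ring

section Stabilization

variable {X : Type*} [NormedAddCommGroup X] [NormedSpace ℝ X] {F : Set (Finset ℕ)}
  {x : Finset ℕ → X} {C : ℝ}

noncomputable def decodedNorm (F : Set (Finset ℕ)) (x : Finset ℕ → X) (k : ℕ)
    (a : Fin k → ℝ) : Set ℕ → ℝ :=
  decodeColoring F k fun t => ‖∑ j, a j • x (t j)‖

lemma decodedNorm_zero (F : Set (Finset ℕ)) (x : Finset ℕ → X) (k : ℕ) :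
    decodedNorm F x k 0 = 0 := by
  funext K
  unfold decodedNorm decodeColoring
  split_ifs <;> simp [default]

lemma abs_decodedNorm_sub_le (hF : Thin F) (hC : 0 ≤ C) (hbd : ∀ s ∈ F, ‖x s‖ ≤ C) {k : ℕ}
    (a b : Fin k → ℝ) (K : Set ℕ) :
    |decodedNorm F x k a K - decodedNorm F x k b K| ≤ k * C * ‖a - b‖ := by
  by_cases h : ∃ t, IsDecoding F k K t
  · obtain ⟨t, ht⟩ := h
    rw [decodedNorm, decodedNorm, decodeColoring_eq hF _ ht, decodeColoring_eq hF _ ht]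
    exact abs_norm_sum_smul_sub_le (fun j => hbd _ (ht j).1) a b
  · rw [decodedNorm, decodedNorm, decodeColoring, decodeColoring, dif_neg h, dif_neg h,
      sub_self, abs_zero]
    positivity

lemma exists_almostConstantOn_decodedNorm (hF : RegularThin F) (hC : 0 ≤ C)
    (hbd : ∀ s ∈ F, ‖x s‖ ≤ C) {ε : ℝ} (hε : 0 < ε) (l : ℕ) {A : Set ℕ} (hA : A.Infinite) :
    ∃ B ⊆ A, B.Infinite ∧ ∀ k ∈ Icc 1 l, ∀ a ∈ Metric.closedBall (0 : Fin k → ℝ) 1,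
      AlmostConstantOn (decodedNorm F x k a) ε B := by
  refine exists_subset_forall_of_finite (finite_Icc 1 l)
    (fun _ _ _ _ hB h a ha => (h a ha).mono hB) (fun k _ A hA => ?_) hA
  have hlip := abs_decodedNorm_sub_le hF.1 hC hbd (k := k)
  refine exists_almostConstantOn_of_isCompact (isCompact_closedBall 0 1)
    (fun _ _ => finitelyDetermined_decodeColoring hF.1 hF.2.1 _) (B := k * C)
    (fun a ha K => ?_) (fun δ hδ => ?_) hε hA
  · have := (hlip a 0 K).trans (mul_le_of_le_one_right (by positivity)
      (by simpa using mem_closedBall_zero_iff.mp ha))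
    rwa [decodedNorm_zero, Pi.zero_apply, sub_zero] at this
  · refine ⟨δ / (k * C + 1), by positivity, fun K a _ b _ hab => (hlip a b K).trans ?_⟩
    rw [← dist_eq_norm]
    calc k * C * dist a b ≤ (k * C + 1) * (δ / (k * C + 1)) :=
          mul_le_mul (by linarith) hab.le dist_nonneg (by positivity)
      _ = δ := mul_div_cancel₀ _ (by positivity)

end Stabilization

end HOSM

theorem bounded_F_sequence_stabilizes_general {X : Type*} [NormedAddCommGroup X]
    [NormedSpace ℝ X]
    (F : Set (Finset ℕ)) (hF : RegularThin F) (x : Finset ℕ → X)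
    (C : ℝ) (hC : 0 < C) (hbd : ∀ s ∈ F, ‖x s‖ ≤ C)
    (δ : ℕ → ℝ) (hδ : ∀ n, 0 < δ n) (N : Set ℕ) (hN : N.Infinite) :
    ∃ M : Set ℕ, M ⊆ N ∧ M.Infinite ∧
      ∀ l k : ℕ, 1 ≤ k → k ≤ l → ∀ a : Fin k → ℝ, (∀ j, |a j| ≤ 1) →
        ∀ s t : Fin k → Finset ℕ,
          IsPlegma s → (∀ j, s j ∈ restrict F M) → (∀ j, nth M l ≤ elt (s j) 0) →
          IsPlegma t → (∀ j, t j ∈ restrict F M) → (∀ j, nth M l ≤ elt (t j) 0) →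
          |‖∑ j, a j • x (t j)‖ - ‖∑ j, a j • x (s j)‖| ≤ δ l := by
  obtain ⟨A, hA, hAN, hstable⟩ := exists_isFusionSeq (fun j => 2 * j)
    (Q := fun l _ B => ∀ k ∈ Icc 1 l, ∀ a ∈ Metric.closedBall (0 : Fin k → ℝ) 1,
      AlmostConstantOn (decodedNorm F x k a) (δ l) B)
    (fun l _ _ hB => exists_almostConstantOn_decodedNorm hF hC.le hbd (hδ l) l hB) hN
  refine ⟨range (fusionPt A _), hA.range_subset.trans hAN,
    infinite_range_of_injective hA.strictMono.injective, ?_⟩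
  intro l k hk hkl a ha s t hs hsF hsl ht htF htl
  obtain ⟨Ks, hKsA, hKs, hdecs⟩ := hA.exists_isDecoding hkl hs hsF hsl
  obtain ⟨Kt, hKtA, hKt, hdect⟩ := hA.exists_isDecoding hkl ht htF htl
  have ha' : a ∈ Metric.closedBall (0 : Fin k → ℝ) 1 :=
    mem_closedBall_zero_iff.mpr ((pi_norm_le_iff_of_nonneg zero_le_one).mpr ha)
  have := hstable l k ⟨hk, hkl⟩ a ha' Kt hKtA hKt Ks hKsA hKs
  rwa [decodedNorm, decodeColoring_eq hF.1 _ hdect, decodeColoring_eq hF.1 _ hdecs] at this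

/-- (Higher order Brunel–Sucheston stabilization.)  For every bounded
`F`-sequence in a Banach space, every sequence of positive errors `(δ_n)` and every infinite
`N` there is an infinite `M ⊆ N` such that the norms of plegma combinations stabilize up to
`δ_l`. -/
theorem bounded_F_sequence_stabilizes {X : Type*} [NormedAddCommGroup X]
    [NormedSpace ℝ X] [CompleteSpace X]
    (F : Set (Finset ℕ)) (hF : RegularThin F) (x : Finset ℕ → X)
    (C : ℝ) (hC : 0 < C) (hbd : ∀ s ∈ F, ‖x s‖ ≤ C)
    (δ : ℕ → ℝ) (hδ : ∀ n, 0 < δ n) (N : Set ℕ) (hN : N.Infinite) :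
    ∃ M : Set ℕ, M ⊆ N ∧ M.Infinite ∧
      ∀ l k : ℕ, 1 ≤ k → k ≤ l → ∀ a : Fin k → ℝ, (∀ j, |a j| ≤ 1) →
        ∀ s t : Fin k → Finset ℕ,
          IsPlegma s → (∀ j, s j ∈ restrict F M) → (∀ j, nth M l ≤ elt (s j) 0) →
          IsPlegma t → (∀ j, t j ∈ restrict F M) → (∀ j, nth M l ≤ elt (t j) 0) →
          |‖∑ j, a j • x (t j)‖ - ‖∑ j, a j • x (s j)‖| ≤ δ l :=
  bounded_F_sequence_stabilizes_general F hF x C hC hbd δ hδ N hN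
end

section
/- Let F be a regular thin family and (x_s)_{s∈F} an F-sequence in a topological space (X,T). Then for every M ∈ [ℕ]^∞ such that the closure of {x_s : s ∈ F↾M} is a compact metrizable subspace of (X,T), there exists L ∈ [M]^∞ such that (x_s)_{s∈F↾L} is subordinated, i.e. there exists a continuous map φ̂ : F̂↾L → (X,T) with φ̂(s) = x_s for every s ∈ F↾L. -/
open Set Filter

open HOSM

namespace HOSM

section Aux

lemma initSeg_refl (s : Finset ℕ) : InitSeg s s := ⟨subset_rfl, fun a ha _ _ _ => ha⟩

lemma initSeg_trans {t u v : Finset ℕ} (h1 : InitSeg t u) (h2 : InitSeg u v) : InitSeg t v :=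
  ⟨h1.1.trans h2.1, fun a hav b hbt hab =>
    h1.2 a (h2.2 a hav b (h1.1 hbt) hab) b hbt hab⟩

lemma mem_hat_of_mem {F : Set (Finset ℕ)} {s : Finset ℕ} (hs : s ∈ F) : s ∈ hat F :=
  ⟨s, hs, initSeg_refl s⟩

lemma mem_hat_of_initSeg {F : Set (Finset ℕ)} {t s : Finset ℕ} (hs : s ∈ hat F)
    (h : InitSeg t s) : t ∈ hat F := by
  obtain ⟨u, hu, h2⟩ := hs
  exact ⟨u, hu, initSeg_trans h h2⟩

lemma initSeg_of_above {t s : Finset ℕ} (hts : t ⊆ s)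
    (h : ∀ a ∈ s, a ∉ t → ∀ b ∈ t, b < a) : InitSeg t s := by
  refine ⟨hts, fun a has b hbt hab => ?_⟩
  by_contra hnat
  exact absurd hab (not_le.mpr (h a has hnat b hbt))

lemma initSeg_insert_of_above {t s : Finset ℕ} (hts : t ⊆ s)
    (h : ∀ a ∈ s, a ∉ t → ∀ b ∈ t, b < a)
    {e : ℕ} (hes : e ∈ s) (het : e ∉ t) (hmin : ∀ a ∈ s, a ∉ t → e ≤ a) :
    InitSeg (insert e t) s := by
  refine ⟨Finset.insert_subset hes hts, fun a has b hbt hab => ?_⟩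
  rcases Finset.mem_insert.mp hbt with rfl | hbt'
  · by_cases hat' : a ∈ t
    · exact Finset.mem_insert_of_mem hat'
    · exact Finset.mem_insert.mpr (Or.inl (le_antisymm hab (hmin a has hat')))
  · by_cases hat' : a ∈ t
    · exact Finset.mem_insert_of_mem hat'
    · exact absurd hab (not_le.mpr (h a has hat' b hbt'))

lemma properInitSeg_insert_self {t : Finset ℕ} {l : ℕ} (h : ∀ b ∈ t, b < l) :
    ProperInitSeg t (insert l t) := by
  have hlt : l ∉ t := fun hl => lt_irrefl l (h l hl)
  refine ⟨⟨Finset.subset_insert _ _, fun a ha b hb hab => ?_⟩, fun he => hlt ?_⟩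
  · rcases Finset.mem_insert.mp ha with rfl | ha'
    · exact absurd hab (not_le.mpr (h b hb))
    · exact ha'
  · rw [he]; exact Finset.mem_insert_self l t

lemma eq_of_initSeg_of_thin {F : Set (Finset ℕ)} (hthin : Thin F) {s u : Finset ℕ}
    (hs : s ∈ F) (hu : u ∈ hat F) (h : InitSeg s u) : u = s := by
  by_contra hne
  obtain ⟨v, hv, h2⟩ := hu
  have hsv : InitSeg s v := initSeg_trans h h2
  have hne2 : s ≠ v := by
    rintro rfl
    exact hne (Finset.Subset.antisymm h2.1 h.1)
  exact hthin v hv s hs ⟨hsv, hne2⟩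

lemma acc_extRel {F : Set (Finset ℕ)} (hcl : IsClosed (chi '' hat F)) (t0 : Finset ℕ) :
    Acc (extRel F) t0 := by
  classical
  by_contra ht0
  have hstep : ∀ a, ¬ Acc (extRel F) a → ∃ b, extRel F b a ∧ ¬ Acc (extRel F) b := by
    intro a ha
    by_contra hb
    push_neg at hb
    exact ha (Acc.intro a hb)
  choose! g hg1 hg2 using hstep
  set f : ℕ → Finset ℕ := fun n => g^[n] t0 with hf
  have hsucc : ∀ n, f (n + 1) = g (f n) := fun n => Function.iterate_succ_apply' g n t0
  have hnacc : ∀ n, ¬ Acc (extRel F) (f n) := by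
    intro n
    induction n with
    | zero => exact ht0
    | succ k ih => rw [hsucc]; exact hg2 _ ih
  have hrel : ∀ n, extRel F (f (n + 1)) (f n) := fun n => by
    rw [hsucc]; exact hg1 _ (hnacc n)
  have hss : ∀ n, f n ⊂ f (n + 1) := fun n =>
    Finset.ssubset_iff_subset_ne.mpr ⟨(hrel n).2.1.1, (hrel n).2.2⟩
  have hmono' : ∀ m k, f m ⊆ f (m + k) := by
    intro m k
    induction k with
    | zero => exact subset_rfl
    | succ i ihk => exact ihk.trans (hss (m + i)).subset
  have hmono : ∀ m n, m ≤ n → f m ⊆ f n := by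
    intro m n h
    have : n = m + (n - m) := by omega
    rw [this]
    exact hmono' m (n - m)
  have hcard : ∀ n, n ≤ (f n).card := by
    intro n
    induction n with
    | zero => exact Nat.zero_le _
    | succ k ih => exact Nat.succ_le_of_lt (lt_of_le_of_lt ih (Finset.card_lt_card (hss k)))
  set glim : ℕ → Bool := fun q => decide (∃ n, q ∈ f n) with hglim
  have hconv : Filter.Tendsto (fun n => chi (f n)) Filter.atTop (nhds glim) := by
    rw [tendsto_pi_nhds]
    intro q
    by_cases h : ∃ n, q ∈ f n
    · obtain ⟨n0, hn0⟩ := h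
      apply Filter.Tendsto.congr' _ tendsto_const_nhds
      filter_upwards [Filter.eventually_ge_atTop n0] with n hn
      have h1 : glim q = true := decide_eq_true ⟨n0, hn0⟩
      have h2 : chi (f n) q = true := decide_eq_true (hmono n0 n hn hn0)
      rw [h1, h2]
    · apply Filter.Tendsto.congr' _ tendsto_const_nhds
      apply Filter.Eventually.of_forall
      intro n
      have h1 : glim q = false := decide_eq_false (by simpa using h)
      have h2 : chi (f n) q = false := decide_eq_false (fun hq => h ⟨n, hq⟩)
      simp [h1, h2]
  have hmemcl : glim ∈ chi '' hat F := by
    apply hcl.mem_of_tendsto hconv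
    filter_upwards [Filter.eventually_ge_atTop 1] with n hn
    obtain ⟨k, rfl⟩ : ∃ k, n = k + 1 := ⟨n - 1, by omega⟩
    exact Set.mem_image_of_mem chi (hrel k).1
  obtain ⟨s, hsmem, hchi⟩ := hmemcl
  have hsub : ∀ n, f n ⊆ s := by
    intro n b hb
    have h1 : glim b = true := decide_eq_true ⟨n, hb⟩
    have h2 : chi s b = glim b := congrFun hchi b
    have : chi s b = true := h2.trans h1
    simpa [chi] using this
  have h1 := hcard (s.card + 1)
  have h2 := Finset.card_le_card (hsub (s.card + 1))
  omega

end Aux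

section Key

variable {Z : Type*} [MetricSpace Z] [CompactSpace Z] [Nonempty Z]

lemma key {F : Set (Finset ℕ)} (hthin : Thin F) (hcl : IsClosed (chi '' hat F))
    (x' : Finset ℕ → Z) :
    ∀ t : Finset ℕ, t ∈ hat F → ∀ N : Set ℕ, N.Infinite → (∀ b ∈ t, ∀ l ∈ N, b < l) →
    ∃ L : Set ℕ, L ⊆ N ∧ L.Infinite ∧ ∃ φ : Finset ℕ → Z,
      (∀ s ∈ F, t ⊆ s → (↑(s \ t) : Set ℕ) ⊆ L → φ s = x' s) ∧
      (∀ a ∈ hat F, t ⊆ a → (↑(a \ t) : Set ℕ) ⊆ L → ∀ ε : ℝ, 0 < ε → ∃ n₀ : ℕ,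
        ∀ l ∈ L, n₀ ≤ l → (∀ b ∈ a, b < l) → insert l a ∈ hat F →
          dist (φ (insert l a)) (φ a) < ε) := by
  intro t
  have hacc : Acc (extRel F) t := acc_extRel hcl t
  induction hacc with
  | intro t _ ih =>
  intro htF N hN hsep
  classical
  set E : Set ℕ := {l ∈ N | insert l t ∈ hat F} with hE
  by_cases hEinf : E.Infinite
  · -- E infinite: recursive construction
    have hsep' : ∀ l ∈ E, ∀ b ∈ t, b < l := fun l hl b hb => hsep b hb l hl.1
    have step : ∀ L0 : Set ℕ, L0 ⊆ E → L0.Infinite →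
        ∃ p : ℕ × Set ℕ × (Finset ℕ → Z),
          p.1 ∈ L0 ∧ p.2.1 ⊆ L0 ∧ (∀ m ∈ p.2.1, p.1 < m) ∧ p.2.1.Infinite ∧
          (∀ s ∈ F, insert p.1 t ⊆ s → (↑(s \ insert p.1 t) : Set ℕ) ⊆ p.2.1 →
            p.2.2 s = x' s) ∧
          (∀ a ∈ hat F, insert p.1 t ⊆ a → (↑(a \ insert p.1 t) : Set ℕ) ⊆ p.2.1 →
            ∀ ε : ℝ, 0 < ε → ∃ n₀ : ℕ, ∀ l ∈ p.2.1, n₀ ≤ l → (∀ b ∈ a, b < l) →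
              insert l a ∈ hat F → dist (p.2.2 (insert l a)) (p.2.2 a) < ε) := by
      intro L0 hL0E hL0inf
      obtain ⟨n', hn'⟩ := hL0inf.nonempty
      have hn'E : n' ∈ E := hL0E hn'
      have hchild : insert n' t ∈ hat F := hn'E.2
      have hproper : ProperInitSeg t (insert n' t) :=
        properInitSeg_insert_self (hsep' n' hn'E)
      have hN'inf : ({m ∈ L0 | n' < m} : Set ℕ).Infinite := by
        apply Set.Infinite.mono (s := L0 \ {m : ℕ | m ≤ n'})
        · intro m hm
          exact ⟨hm.1, by simpa using hm.2⟩
        · exact hL0inf.diff (Set.finite_le_nat n')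
      have hsep'' : ∀ b ∈ insert n' t, ∀ l ∈ ({m ∈ L0 | n' < m} : Set ℕ), b < l := by
        intro b hb l hl
        rcases Finset.mem_insert.mp hb with rfl | hb'
        · exact hl.2
        · exact hsep' l (hL0E hl.1) b hb'
      obtain ⟨L', hL'sub, hL'inf, φ', hk1, hk2⟩ :=
        ih (insert n' t) ⟨hchild, hproper⟩ hchild {m ∈ L0 | n' < m} hN'inf hsep''
      exact ⟨(n', L', φ'), hn', fun m hm => (hL'sub hm).1, fun m hm => (hL'sub hm).2,
        hL'inf, hk1, hk2⟩
    -- the chain of states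
    set Good : ℕ × Set ℕ × (Finset ℕ → Z) → Prop := fun p =>
      p.2.1 ⊆ E ∧ p.2.1.Infinite ∧ (∀ m ∈ p.2.1, p.1 < m) ∧ p.1 ∈ E ∧
      (∀ s ∈ F, insert p.1 t ⊆ s → (↑(s \ insert p.1 t) : Set ℕ) ⊆ p.2.1 →
        p.2.2 s = x' s) ∧
      (∀ a ∈ hat F, insert p.1 t ⊆ a → (↑(a \ insert p.1 t) : Set ℕ) ⊆ p.2.1 →
        ∀ ε : ℝ, 0 < ε → ∃ n₀ : ℕ, ∀ l ∈ p.2.1, n₀ ≤ l → (∀ b ∈ a, b < l) →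
          insert l a ∈ hat F → dist (p.2.2 (insert l a)) (p.2.2 a) < ε) with hGood
    have hq0 : ∃ q : {p // Good p}, True := by
      obtain ⟨p, hp1, hp2, hp3, hp4, hp5, hp6⟩ := step E subset_rfl hEinf
      exact ⟨⟨p, hp2, hp4, hp3, hp1, hp5, hp6⟩, trivial⟩
    obtain ⟨q0, -⟩ := hq0
    have hstep' : ∀ q : {p // Good p}, ∃ q' : {p // Good p},
        q'.1.1 ∈ q.1.2.1 ∧ q'.1.2.1 ⊆ q.1.2.1 := by
      intro q
      obtain ⟨p, hp1, hp2, hp3, hp4, hp5, hp6⟩ := step q.1.2.1 q.2.1 q.2.2.1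
      exact ⟨⟨p, hp2.trans q.2.1, hp4, hp3, q.2.1 hp1, hp5, hp6⟩, hp1, hp2⟩
    choose stepf hstep1 hstep2 using hstep'
    set g : ℕ → {p // Good p} := fun k => stepf^[k] q0 with hg
    have hgsucc : ∀ k, g (k + 1) = stepf (g k) := fun k =>
      Function.iterate_succ_apply' stepf k q0
    set n : ℕ → ℕ := fun k => (g k).1.1 with hn
    set Lk : ℕ → Set ℕ := fun k => (g k).1.2.1 with hLk
    set φk : ℕ → Finset ℕ → Z := fun k => (g k).1.2.2 with hφk
    have hnext1 : ∀ k, n (k + 1) ∈ Lk k := fun k => by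
      show (g (k + 1)).1.1 ∈ (g k).1.2.1
      rw [hgsucc k]; exact hstep1 (g k)
    have hnext2 : ∀ k, Lk (k + 1) ⊆ Lk k := fun k => by
      show (g (k + 1)).1.2.1 ⊆ (g k).1.2.1
      rw [hgsucc k]; exact hstep2 (g k)
    have hLmono : ∀ j k, j ≤ k → Lk k ⊆ Lk j := by
      intro j k h
      induction k with
      | zero => rw [Nat.le_zero.mp h]
      | succ i ihk =>
        rcases Nat.lt_or_ge j (i + 1) with h' | h'
        · exact (hnext2 i).trans (ihk (by omega))
        · have : j = i + 1 := by omega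
          rw [this]
    have hbound : ∀ k, ∀ m ∈ Lk k, n k < m := fun k => (g k).2.2.2.1
    have hnmono : StrictMono n := strictMono_nat_of_lt_succ fun k =>
      hbound k _ (hnext1 k)
    have hnin : ∀ j k, j < k → n k ∈ Lk j := by
      intro j k h
      rcases k with _ | i
      · omega
      · exact hLmono j i (by omega) (hnext1 i)
    have hnE : ∀ k, n k ∈ E := fun k => (g k).2.2.2.2.1
    have hK1k : ∀ k, ∀ s ∈ F, insert (n k) t ⊆ s →
        (↑(s \ insert (n k) t) : Set ℕ) ⊆ Lk k → φk k s = x' s := fun k => (g k).2.2.2.2.2.1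
    have hK2k : ∀ k, ∀ a ∈ hat F, insert (n k) t ⊆ a →
        (↑(a \ insert (n k) t) : Set ℕ) ⊆ Lk k →
        ∀ ε : ℝ, 0 < ε → ∃ n₀ : ℕ, ∀ l ∈ Lk k, n₀ ≤ l → (∀ b ∈ a, b < l) →
          insert l a ∈ hat F → dist (φk k (insert l a)) (φk k a) < ε :=
      fun k => (g k).2.2.2.2.2.2
    -- compactness: convergent subsequence of the values at the children of t
    set u : ℕ → Z := fun k => φk k (insert (n k) t) with hu
    obtain ⟨y, -, σ, hσ, hconv⟩ := isCompact_univ.tendsto_subseq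
      (fun k => Set.mem_univ (u k))
    set m : ℕ → ℕ := fun j => n (σ j) with hm
    have hmmono : StrictMono m := hnmono.comp hσ
    set Lstar : Set ℕ := Set.range m with hLstar
    have hLstarN : Lstar ⊆ N := by
      rintro _ ⟨j, rfl⟩
      exact (hnE (σ j)).1
    have hLstarinf : Lstar.Infinite := Set.infinite_range_of_injective hmmono.injective
    set P : Finset ℕ → ℕ → Prop := fun a j => m j ∈ a \ t ∧ ∀ b ∈ a \ t, m j ≤ b with hP
    have hPuniq : ∀ a j j', P a j → P a j' → j = j' := by
      intro a j j' hj hj'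
      exact hmmono.injective (le_antisymm (hj.2 _ hj'.1) (hj'.2 _ hj.1))
    set φs : Finset ℕ → Z := fun a => if h : ∃ j, P a j then φk (σ h.choose) a else y with hφs
    have hφs_eq : ∀ a j, P a j → φs a = φk (σ j) a := by
      intro a j hj
      have hex : ∃ j, P a j := ⟨j, hj⟩
      rw [hφs]
      simp only [dif_pos hex]
      rw [hPuniq a _ _ hex.choose_spec hj]
    have hφs_t : φs t = y := by
      rw [hφs]
      simp only []
      rw [dif_neg]
      rintro ⟨j, hj, -⟩
      simp at hj
    have hdom : ∀ a : Finset ℕ, t ⊆ a → (↑(a \ t) : Set ℕ) ⊆ Lstar → a ≠ t →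
        ∃ j, P a j ∧ insert (m j) t ⊆ a ∧
          (↑(a \ insert (m j) t) : Set ℕ) ⊆ Lk (σ j) := by
      intro a hta hsub hne
      have hd : (a \ t).Nonempty := by
        rw [Finset.sdiff_nonempty]
        exact fun h => hne (Finset.Subset.antisymm h hta)
      have he : (a \ t).min' hd ∈ a \ t := Finset.min'_mem _ _
      obtain ⟨j, hj⟩ : ∃ j, m j = (a \ t).min' hd := hsub he
      have hPj : P a j := ⟨hj ▸ he, fun b hb => hj ▸ Finset.min'_le _ _ hb⟩
      refine ⟨j, hPj, ?_, ?_⟩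
      · exact Finset.insert_subset (hj ▸ (Finset.mem_sdiff.mp he).1) hta
      · intro b hb
        have hb' : b ∈ a \ insert (m j) t := hb
        rw [Finset.mem_sdiff, Finset.mem_insert] at hb'
        push_neg at hb'
        have hbdt : b ∈ a \ t := Finset.mem_sdiff.mpr ⟨hb'.1, hb'.2.2⟩
        obtain ⟨j', hj'⟩ : ∃ j', m j' = b := hsub hbdt
        have hlt : m j < m j' := lt_of_le_of_ne (hj' ▸ hPj.2 b hbdt)
          (by rw [hj']; exact fun hmm => hb'.2.1 hmm.symm)
        have hσlt : σ j < σ j' := hσ (hmmono.lt_iff_lt.mp hlt)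
        have : n (σ j') ∈ Lk (σ j) := hnin (σ j) (σ j') hσlt
        rw [← hj']
        exact this
    refine ⟨Lstar, hLstarN, hLstarinf, φs, ?_, ?_⟩
    · -- K1
      intro s hsF hts hsub
      rcases eq_or_ne s t with rfl | hne
      · exfalso
        obtain ⟨l, hl⟩ := hEinf.nonempty
        have heq : insert l s = s := eq_of_initSeg_of_thin hthin hsF hl.2
          (properInitSeg_insert_self (fun b hb => hsep b hb l hl.1)).1
        have : l ∈ s := by rw [← heq]; exact Finset.mem_insert_self l s
        exact lt_irrefl l (hsep l this l hl.1)
      · obtain ⟨j, hPj, hins, hsub'⟩ := hdom s hts hsub hne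
        rw [hφs_eq s j hPj]
        exact hK1k (σ j) s hsF hins hsub'
    · -- K2
      intro a haF hta hsub ε hε
      rcases eq_or_ne a t with rfl | hne
      · rw [Metric.tendsto_atTop] at hconv
        obtain ⟨J, hJ⟩ := hconv ε hε
        refine ⟨m J + 1, ?_⟩
        intro l hlL hlge hlt hins
        obtain ⟨j, rfl⟩ := hlL
        have hjJ : J ≤ j := by
          by_contra h
          have := hmmono (show j < J by omega)
          omega
        have hmjt : m j ∉ a := fun hmem => lt_irrefl (m j) (hlt (m j) hmem)
        have heq : φs (insert (m j) a) = φk (σ j) (insert (m j) a) := by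
          apply hφs_eq
          constructor
          · rw [Finset.mem_sdiff]
            exact ⟨Finset.mem_insert_self _ _, hmjt⟩
          · intro b hb
            rw [Finset.mem_sdiff, Finset.mem_insert] at hb
            rcases hb.1 with rfl | hb'
            · exact le_rfl
            · exact absurd hb' hb.2
        rw [heq, hφs_t]
        exact hJ j hjJ
      · obtain ⟨j, hPj, hins, hsub'⟩ := hdom a hta hsub hne
        obtain ⟨n₀, hn₀⟩ := hK2k (σ j) a haF hins hsub' ε hε
        refine ⟨n₀, ?_⟩
        intro l hlL hlge hlab hinsa
        obtain ⟨j'', hj''⟩ := hlL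
        have hmja : m j ∈ a := (Finset.mem_sdiff.mp hPj.1).1
        have hl2 : m j < l := hlab (m j) hmja
        have hjj : j < j'' := hmmono.lt_iff_lt.mp (hj'' ▸ hl2)
        have hlin : l ∈ Lk (σ j) := by
          rw [← hj'']
          exact hnin (σ j) (σ j'') (hσ hjj)
        have h1 : φs a = φk (σ j) a := hφs_eq a j hPj
        have h2 : φs (insert l a) = φk (σ j) (insert l a) := by
          apply hφs_eq
          constructor
          · have hmj := Finset.mem_sdiff.mp hPj.1
            exact Finset.mem_sdiff.mpr ⟨Finset.mem_insert_of_mem hmj.1, hmj.2⟩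
          · intro b hb
            rw [Finset.mem_sdiff, Finset.mem_insert] at hb
            rcases hb.1 with rfl | hba
            · exact le_of_lt hl2
            · exact hPj.2 b (Finset.mem_sdiff.mpr ⟨hba, hb.2⟩)
        rw [h1, h2]
        exact hn₀ l hlin hlge hlab hinsa
  · -- E finite
    refine ⟨N \ E, Set.diff_subset, hN.diff (Set.not_infinite.mp hEinf), fun _ => x' t,
      ?_, ?_⟩
    · intro s hsF hts hsub
      rcases eq_or_ne s t with rfl | hne
      · rfl
      · exfalso
        have hd : (s \ t).Nonempty := by
          rw [Finset.sdiff_nonempty]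
          exact fun h => hne (Finset.Subset.antisymm h hts)
        have he : (s \ t).min' hd ∈ s \ t := Finset.min'_mem _ _
        have heL : (s \ t).min' hd ∈ N \ E := hsub he
        have habove : ∀ a ∈ s, a ∉ t → ∀ b ∈ t, b < a := by
          intro a ha hat' b hb
          have haL : a ∈ N \ E := hsub (Finset.mem_sdiff.mpr ⟨ha, hat'⟩)
          exact hsep b hb a haL.1
        have hins : InitSeg (insert ((s \ t).min' hd) t) s :=
          initSeg_insert_of_above hts habove (Finset.mem_sdiff.mp he).1
            (Finset.mem_sdiff.mp he).2
            (fun a ha hat' => Finset.min'_le _ _ (Finset.mem_sdiff.mpr ⟨ha, hat'⟩))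
        have : insert ((s \ t).min' hd) t ∈ hat F :=
          mem_hat_of_initSeg (mem_hat_of_mem hsF) hins
        exact heL.2 ⟨heL.1, this⟩
    · intro a _ _ _ ε hε
      exact ⟨0, fun l _ _ _ _ => by simpa [dist_self] using hε⟩

end Key

end HOSM

/-- If `F` is regular thin, `(x_s)_{s∈F}` is an `F`-sequence in a
topological space `X` and `M` is infinite with the closure of `{x_s : s ∈ F↾M}` compact and
metrizable, then there is an infinite `L ⊆ M` such that `(x_s)_{s∈F↾L}` is subordinated. -/
theorem exists_subordinated_subsequence {X : Type*} [TopologicalSpace X]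
    (F : Set (Finset ℕ)) (hF : RegularThin F) (x : Finset ℕ → X)
    (M : Set ℕ) (hM : M.Infinite)
    (hcomp : IsCompact (closure (x '' restrict F M)))
    (hmetr : TopologicalSpace.MetrizableSpace (closure (x '' restrict F M))) :
    ∃ L : Set ℕ, L ⊆ M ∧ L.Infinite ∧ Subordinated F L x := by
  classical
  by_cases hne : (restrict F M).Nonempty
  · obtain ⟨s₀, hs₀⟩ := hne
    letI : MetricSpace (closure (x '' restrict F M)) :=
      TopologicalSpace.metrizableSpaceMetric _
    haveI : CompactSpace (closure (x '' restrict F M)) := isCompact_iff_compactSpace.mp hcomp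
    haveI hYne : Nonempty (closure (x '' restrict F M)) :=
      ⟨⟨x s₀, subset_closure (Set.mem_image_of_mem x hs₀)⟩⟩
    set x' : Finset ℕ → (closure (x '' restrict F M)) := fun s =>
      if h : s ∈ restrict F M then ⟨x s, subset_closure (Set.mem_image_of_mem x h)⟩
      else Classical.arbitrary _ with hx'
    have hhatempty : (∅ : Finset ℕ) ∈ hat F :=
      ⟨s₀, hs₀.1, Finset.empty_subset _, fun a _ b hb => absurd hb (Finset.notMem_empty b)⟩
    have hclosed : IsClosed (chi '' hat F) := hF.2.1
    obtain ⟨L₁, hL₁M, hL₁inf, φ₁, hK1, hK2⟩ :=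
      key hF.1 hclosed x' ∅ hhatempty M hM (by simp)
    have hK2' : ∀ (a : Finset ℕ) (j : ℕ), ∃ n₀ : ℕ, ∀ l ∈ L₁, n₀ ≤ l → (∀ b ∈ a, b < l) →
        a ∈ hat F → (↑a : Set ℕ) ⊆ L₁ → insert l a ∈ hat F →
        dist (φ₁ (insert l a)) (φ₁ a) < (1/2 : ℝ) ^ j := by
      intro a j
      by_cases h : a ∈ hat F ∧ (↑a : Set ℕ) ⊆ L₁
      · obtain ⟨n₀, hn₀⟩ := hK2 a h.1 (Finset.empty_subset a)
          (by simpa using h.2) ((1/2 : ℝ) ^ j) (by positivity)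
        exact ⟨n₀, fun l hl hle hlt _ _ hins => hn₀ l hl hle hlt hins⟩
      · exact ⟨0, fun l _ _ _ h1 h2 _ => absurd ⟨h1, h2⟩ h⟩
    choose ν hν using hK2'
    have step2 : ∀ S : Finset ℕ, ∀ j : ℕ, ∃ l : ℕ, (↑S : Set ℕ) ⊆ L₁ →
        l ∈ L₁ ∧ (∀ b ∈ S, b < l) ∧
        ∀ a ∈ S.powerset, a ∈ hat F → insert l a ∈ hat F →
          dist (φ₁ (insert l a)) (φ₁ a) < (1/2 : ℝ) ^ j := by
      intro S j
      by_cases hS : (↑S : Set ℕ) ⊆ L₁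
      · obtain ⟨l, hlL, hlgt⟩ :=
          hL₁inf.exists_gt (max (S.sup id) (S.powerset.sup fun a => ν a j))
        refine ⟨l, fun _ => ⟨hlL, ?_, ?_⟩⟩
        · intro b hb
          exact lt_of_le_of_lt ((Finset.le_sup (f := id) hb).trans (le_max_left _ _)) hlgt
        · intro a ha haF hins
          have hasub : a ⊆ S := Finset.mem_powerset.mp ha
          refine hν a j l hlL ?_ ?_ haF ?_ hins
          · exact le_of_lt (lt_of_le_of_lt ((Finset.le_sup (f := fun a => ν a j) ha).trans (le_max_right _ _)) hlgt)
          · intro b hb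
            exact lt_of_le_of_lt
              ((Finset.le_sup (f := id) (hasub hb)).trans (le_max_left _ _)) hlgt
          · exact fun b hb => hS (hasub hb)
      · exact ⟨0, fun h => absurd h hS⟩
    choose nextl hnextl using step2
    set S : ℕ → Finset ℕ := fun j => Nat.rec ∅ (fun i Si => insert (nextl Si i) Si) j
      with hSdef
    set lam : ℕ → ℕ := fun j => nextl (S j) j with hlamdef
    have hSsucc : ∀ j, S (j + 1) = insert (lam j) (S j) := fun j => rfl
    have hSL : ∀ j, (↑(S j) : Set ℕ) ⊆ L₁ := by
      intro j
      induction j with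
      | zero => intro b hb; simp [hSdef] at hb
      | succ k ihk =>
        intro b hb
        rw [hSsucc] at hb
        rcases Finset.mem_insert.mp hb with rfl | hb'
        · exact (hnextl (S k) k ihk).1
        · exact ihk hb'
    have hlamL : ∀ j, lam j ∈ L₁ := fun j => (hnextl (S j) j (hSL j)).1
    have hlamgt : ∀ j, ∀ b ∈ S j, b < lam j := fun j => (hnextl (S j) j (hSL j)).2.1
    have hguar : ∀ j, ∀ a ⊆ S j, a ∈ hat F → insert (lam j) a ∈ hat F →
        dist (φ₁ (insert (lam j) a)) (φ₁ a) < (1/2 : ℝ) ^ j :=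
      fun j a ha => (hnextl (S j) j (hSL j)).2.2 a (Finset.mem_powerset.mpr ha)
    have hSmono : ∀ j k, j ≤ k → S j ⊆ S k := by
      intro j k h
      induction k with
      | zero => rw [Nat.le_zero.mp h]
      | succ i ihk =>
        rcases Nat.lt_or_ge j (i + 1) with h' | h'
        · refine (ihk (by omega)).trans ?_
          rw [hSsucc]
          exact Finset.subset_insert _ _
        · have hji : j = i + 1 := by omega
          rw [hji]
    have hlammem : ∀ j k, j < k → lam j ∈ S k := by
      intro j k h
      apply hSmono (j + 1) k h
      rw [hSsucc]
      exact Finset.mem_insert_self _ _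
    have hlmono : StrictMono lam :=
      strictMono_nat_of_lt_succ fun j => hlamgt (j + 1) _ (hlammem j (j + 1) (by omega))
    have hG : ∀ i j, lam i < lam j → lam i ∈ S j := fun i j h =>
      hlammem i j (hlmono.lt_iff_lt.mp h)
    set L : Set ℕ := Set.range lam with hLdef
    have hLL₁ : L ⊆ L₁ := by rintro _ ⟨j, rfl⟩; exact hlamL j
    have hLM : L ⊆ M := fun b hb => hL₁M (hLL₁ hb)
    have hLinf : L.Infinite := Set.infinite_range_of_injective hlmono.injective
    have tel : ∀ r : ℕ, ∀ t' t : Finset ℕ, ∀ J : ℕ, t' ∈ hat F → (↑t' : Set ℕ) ⊆ L →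
        t ⊆ t' → (∀ b ∈ t, b < lam J) → (∀ b ∈ t', b ∉ t → lam J ≤ b) →
        (t' \ t).card = r → dist (φ₁ t') (φ₁ t) ≤ 2 * (1/2 : ℝ) ^ J := by
      intro r
      induction r with
      | zero =>
        intro t' t J _ _ hsub _ _ hcard
        have ht't : t' = t := by
          apply Finset.Subset.antisymm _ hsub
          intro b hb
          by_contra hbt
          have hmem : b ∈ t' \ t := Finset.mem_sdiff.mpr ⟨hb, hbt⟩
          rw [Finset.card_eq_zero.mp hcard] at hmem
          exact absurd hmem (Finset.notMem_empty b)
        rw [ht't, dist_self]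
        positivity
      | succ r ih =>
        intro t' t J ht'F ht'L hsub hlt hge hcard
        have hd : (t' \ t).Nonempty := Finset.card_pos.mp (by omega)
        have he : (t' \ t).min' hd ∈ t' \ t := Finset.min'_mem _ _
        have heT' : (t' \ t).min' hd ∈ t' := (Finset.mem_sdiff.mp he).1
        have heNt : (t' \ t).min' hd ∉ t := (Finset.mem_sdiff.mp he).2
        obtain ⟨j₁, hj₁⟩ : ∃ j₁, lam j₁ = (t' \ t).min' hd := ht'L heT'
        have hJj₁ : J ≤ j₁ := by
          apply hlmono.le_iff_le.mp
          rw [hj₁]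
          exact hge _ heT' heNt
        have habove : ∀ a ∈ t', a ∉ t → ∀ b ∈ t, b < a := fun a ha hat' b hb =>
          lt_of_lt_of_le (hlt b hb) (hge a ha hat')
        have htF : t ∈ hat F := mem_hat_of_initSeg ht'F (initSeg_of_above hsub habove)
        have ht₁seg : InitSeg (insert ((t' \ t).min' hd) t) t' :=
          initSeg_insert_of_above hsub habove heT' heNt
            (fun a ha hat' => Finset.min'_le _ _ (Finset.mem_sdiff.mpr ⟨ha, hat'⟩))
        have ht₁F : insert ((t' \ t).min' hd) t ∈ hat F := mem_hat_of_initSeg ht'F ht₁seg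
        have htS : t ⊆ S j₁ := by
          intro b hb
          obtain ⟨i, hi⟩ : ∃ i, lam i = b := ht'L (hsub hb)
          have hblt : b < lam j₁ := lt_of_lt_of_le (hlt b hb) (hlmono.monotone hJj₁)
          rw [← hi]
          exact hG i j₁ (by rw [hi]; exact hblt)
        have hedge : dist (φ₁ (insert ((t' \ t).min' hd) t)) (φ₁ t) < (1/2 : ℝ) ^ j₁ := by
          have hg := hguar j₁ t htS htF (by rw [hj₁]; exact ht₁F)
          rwa [hj₁] at hg
        have hIH : dist (φ₁ t') (φ₁ (insert ((t' \ t).min' hd) t)) ≤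
            2 * (1/2 : ℝ) ^ (j₁ + 1) := by
          apply ih t' _ (j₁ + 1) ht'F ht'L ht₁seg.1
          · intro b hb
            have hstep1 : lam j₁ < lam (j₁ + 1) := hlmono (Nat.lt_succ_self j₁)
            rcases Finset.mem_insert.mp hb with rfl | hb'
            · rw [← hj₁]
              exact hstep1
            · exact lt_trans (lt_of_lt_of_le (hlt b hb') (hlmono.monotone hJj₁)) hstep1
          · intro b hb hbn
            have hbt : b ∉ t := fun h => hbn (Finset.mem_insert_of_mem h)
            have hbne : b ≠ (t' \ t).min' hd := fun h => hbn (h ▸ Finset.mem_insert_self _ _)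
            have hble : (t' \ t).min' hd ≤ b :=
              Finset.min'_le _ _ (Finset.mem_sdiff.mpr ⟨hb, hbt⟩)
            obtain ⟨i, hi⟩ : ∃ i, lam i = b := ht'L hb
            have hlt2 : lam j₁ < lam i := by
              rw [hj₁, hi]
              exact lt_of_le_of_ne hble (Ne.symm hbne)
            have hii : j₁ + 1 ≤ i := hlmono.lt_iff_lt.mp hlt2
            rw [← hi]
            exact hlmono.monotone hii
          · rw [Finset.sdiff_insert, Finset.card_erase_of_mem he, hcard]
            omega
        calc dist (φ₁ t') (φ₁ t) ≤ dist (φ₁ t') (φ₁ (insert ((t' \ t).min' hd) t)) +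
              dist (φ₁ (insert ((t' \ t).min' hd) t)) (φ₁ t) := dist_triangle _ _ _
          _ ≤ 2 * (1/2 : ℝ) ^ (j₁ + 1) + (1/2 : ℝ) ^ j₁ := add_le_add hIH hedge.le
          _ = 2 * (1/2 : ℝ) ^ j₁ := by ring
          _ ≤ 2 * (1/2 : ℝ) ^ J := by
              have hp := pow_le_pow_of_le_one (by norm_num : (0:ℝ) ≤ 1/2)
                (by norm_num : (1/2:ℝ) ≤ 1) hJj₁
              linarith
    have hchi_cont : Continuous chi := continuous_induced_dom
    have cont1 : ContinuousOn φ₁ (restrict (hat F) L) := by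
      intro t ht
      show Filter.Tendsto φ₁ (nhdsWithin t (restrict (hat F) L)) (nhds (φ₁ t))
      rw [Metric.tendsto_nhds]
      intro ε hε
      obtain ⟨J, hJ⟩ := exists_pow_lt_of_lt_one (show (0:ℝ) < ε / 2 by linarith)
        (show (1/2 : ℝ) < 1 by norm_num)
      obtain ⟨J', hJ'ge, hJ'⟩ : ∃ J', J ≤ J' ∧ ∀ b ∈ t, b < lam J' := by
        refine ⟨J + t.sup id + 1, by omega, ?_⟩
        intro b hb
        have h1 : b ≤ t.sup id := Finset.le_sup (f := id) hb
        have h2 : J + t.sup id + 1 ≤ lam (J + t.sup id + 1) := hlmono.le_apply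
        omega
      set U : Set (Finset ℕ) :=
        chi ⁻¹' Set.pi (Set.Iic (lam J')) (fun n => {chi t n}) with hUdef
      have hUopen : IsOpen U :=
        (isOpen_set_pi (Set.finite_Iic _) (fun i _ => isOpen_discrete _)).preimage hchi_cont
      have htU : t ∈ U := fun n _ => rfl
      filter_upwards [mem_nhdsWithin_of_mem_nhds (hUopen.mem_nhds htU),
        self_mem_nhdsWithin] with a haU haD
      have hiff : ∀ n, n ≤ lam J' → (n ∈ a ↔ n ∈ t) := by
        intro n hn
        have h2 : chi a n = chi t n :=
          Set.mem_singleton_iff.mp (Set.mem_pi.mp haU n hn)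
        simpa [chi, decide_eq_decide] using h2
      have hta : t ⊆ a := fun b hb => (hiff b (le_of_lt (hJ' b hb))).mpr hb
      have hge : ∀ b ∈ a, b ∉ t → lam J' ≤ b := by
        intro b hb hbt
        by_contra h
        exact hbt ((hiff b (by omega)).mp hb)
      have hdist := tel (a \ t).card a t J' haD.1 haD.2 hta hJ' hge rfl
      have hpow : (1/2:ℝ) ^ J' ≤ (1/2:ℝ) ^ J :=
        pow_le_pow_of_le_one (by norm_num) (by norm_num) hJ'ge
      calc dist (φ₁ a) (φ₁ t) ≤ 2 * (1/2:ℝ) ^ J' := hdist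
        _ ≤ 2 * (1/2:ℝ) ^ J := by linarith
        _ < ε := by linarith
    refine ⟨L, hLM, hLinf, fun a => ((φ₁ a : closure (x '' restrict F M)) : X), ?_, ?_⟩
    · exact continuous_subtype_val.comp_continuousOn cont1
    · intro s hs
      have h1 : φ₁ s = x' s := by
        apply hK1 s hs.1 (Finset.empty_subset s)
        rw [Finset.sdiff_empty]
        exact fun b hb => hLL₁ (hs.2 hb)
      have hmem : s ∈ restrict F M := ⟨hs.1, fun b hb => hLM (hs.2 hb)⟩
      show ((φ₁ s : closure (x '' restrict F M)) : X) = x s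
      rw [h1]
      simp only [hx']
      rw [dif_pos hmem]
  · refine ⟨M, subset_rfl, hM, fun _ => x ∅, continuousOn_const, ?_⟩
    intro s hs
    exact absurd ⟨s, hs⟩ hne
end
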